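/- arXiv:1608.04025 — 12 statements merged into one kernel-verified Lean document; each statement's English description precedes it below -/
import Mathlib

section
/- If Δ is a pure shifted simplicial complex on an ordered vertex set E, then Δ satisfies the quasi-circuit axiom: if C₁ and C₂ are distinct circuits (minimal non-faces) and c ∈ C₁ ∩ C₂ satisfies c < max(C₁ △ C₂), then there is a circuit C₃ contained in (C₁ ∪ C₂) \ {c}. -/
variable {α : Type*} [LinearOrder α] [DecidableEq α] [Fintype α]

/-- A (abstract) simplicial complex: a downward closed family of finite sets. -/
def IsComplex (Δ : Finset α → Prop) : Prop :=
  ∀ ⦃s t : Finset α⦄, Δ t → s ⊆ t → Δ s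

/-- A simplicial complex with all faces contained in the ground set `E`. -/
def IsComplexOn (E : Finset α) (Δ : Finset α → Prop) : Prop :=
  (∀ ⦃s⦄, Δ s → s ⊆ E) ∧ IsComplex Δ

/-- A facet (basis): a maximal face. -/
def IsFacet (Δ : Finset α → Prop) (B : Finset α) : Prop :=
  Δ B ∧ ∀ ⦃C⦄, Δ C → B ⊆ C → B = C

/-- A circuit with respect to the ground set `E`: a minimal non-face contained in `E`. -/
def IsCircuitOn (E : Finset α) (Δ : Finset α → Prop) (C : Finset α) : Prop :=
  C ⊆ E ∧ ¬ Δ C ∧ ∀ ⦃D⦄, D ⊂ C → Δ D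

/-- A circuit: a minimal non-face. -/
def IsCircuit (Δ : Finset α → Prop) (C : Finset α) : Prop :=
  ¬ Δ C ∧ ∀ ⦃D⦄, D ⊂ C → Δ D

/-- Purity: all facets have the same cardinality. -/
def IsPure (Δ : Finset α → Prop) : Prop :=
  ∀ ⦃B B'⦄, IsFacet Δ B → IsFacet Δ B' → B.card = B'.card

/-- Lexicographic order on finite sets, comparing sorted element lists:
`B <lex B'` iff the minimum of the symmetric difference lies in `B`. -/
def lexLt (B B' : Finset α) : Prop :=
  ∃ a ∈ B \ B', ∀ b ∈ symmDiff B B', a ≤ b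

def lexLe (B B' : Finset α) : Prop := B = B' ∨ lexLt B B'

/-- `B₀` is the lexicographically smallest facet of `Δ`. -/
def IsLexMinFacet (Δ : Finset α → Prop) (B₀ : Finset α) : Prop :=
  IsFacet Δ B₀ ∧ ∀ ⦃B⦄, IsFacet Δ B → lexLe B₀ B

/-- Gale (componentwise) order: the `i`-th smallest element of `B` is at most
the `i`-th smallest element of `B'`, for all `i` (in particular equal cardinalities). -/
def galeLe (B B' : Finset α) : Prop :=
  List.Forall₂ (· ≤ ·) (Finset.sort B (· ≤ ·)) (Finset.sort B' (· ≤ ·))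

/-- Quasi-exchange axiom (without the purity requirement). -/
def QE (Δ : Finset α → Prop) : Prop :=
  ∀ ⦃B₁ B₂⦄, IsFacet Δ B₁ → IsFacet Δ B₂ →
    ∀ b₁ ∈ B₁ \ B₂, (∀ b ∈ B₂ \ B₁, b < b₁) →
      ∃ b₂ ∈ B₂ \ B₁, IsFacet Δ (insert b₂ (B₁.erase b₁))

/-- Quasi-circuit axiom (with circuits taken relative to the ground set `E`). -/
def QCon (E : Finset α) (Δ : Finset α → Prop) : Prop :=
  ∀ ⦃C₁ C₂⦄, IsCircuitOn E Δ C₁ → IsCircuitOn E Δ C₂ → C₁ ≠ C₂ →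
    ∀ c ∈ C₁ ∩ C₂, (∃ m ∈ symmDiff C₁ C₂, c < m) →
      ∃ C₃, IsCircuitOn E Δ C₃ ∧ C₃ ⊆ (C₁ ∪ C₂).erase c

/-- Quasi-circuit axiom (circuits are arbitrary minimal non-faces). -/
def QC (Δ : Finset α → Prop) : Prop :=
  ∀ ⦃C₁ C₂⦄, IsCircuit Δ C₁ → IsCircuit Δ C₂ → C₁ ≠ C₂ →
    ∀ c ∈ C₁ ∩ C₂, (∃ m ∈ symmDiff C₁ C₂, c < m) →
      ∃ C₃, IsCircuit Δ C₃ ∧ C₃ ⊆ (C₁ ∪ C₂).erase c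

/-- `b` is an internally passive element of the facet `B`. -/
def InternallyPassive (Δ : Finset α → Prop) (B : Finset α) (b : α) : Prop :=
  b ∈ B ∧ ∃ b', b' < b ∧ b' ∉ B ∧ IsFacet Δ (insert b' (B.erase b))

/-- Contraction of a face `I`. -/
def contract (Δ : Finset α → Prop) (I : Finset α) : Finset α → Prop :=
  fun J => Disjoint J I ∧ Δ (J ∪ I)

/-- Quasi-independence axiom: `Δ` is pure and for faces `I₁, I₂` with `|I₁| > |I₂|`,
if `I₁ \ I ⊆ B_{I,0}` for some `I ⊆ I₁ ∩ I₂`, then some `e ∈ I₁ \ I₂` extends `I₂`. -/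
def QI (Δ : Finset α → Prop) : Prop :=
  IsPure Δ ∧ ∀ ⦃I₁ I₂ : Finset α⦄, Δ I₁ → Δ I₂ → I₂.card < I₁.card →
    (∃ I, I ⊆ I₁ ∩ I₂ ∧ ∃ B, IsLexMinFacet (contract Δ I) B ∧ I₁ \ I ⊆ B) →
    ∃ e ∈ I₁ \ I₂, Δ (insert e I₂)

/-- The First Basis Property. -/
inductive FBP : (Finset α → Prop) → Prop
  | rank1 (Δ : Finset α → Prop) (h : ∀ s, Δ s → s.card ≤ 1) : FBP Δ
  | unique (Δ : Finset α → Prop) (B : Finset α) (hB : IsFacet Δ B)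
      (hu : ∀ B', IsFacet Δ B' → B' = B) : FBP Δ
  | step (Δ : Finset α → Prop) (B₀ : Finset α) (h₀ : IsLexMinFacet Δ B₀)
      (h1 : ∀ v, Δ {v} → v ∉ B₀ → FBP (contract Δ {v}))
      (h2 : ∀ v, Δ {v} → v ∉ B₀ →
        ∃ Bv, IsLexMinFacet (contract Δ {v}) Bv ∧ Bv ⊆ B₀) :
      FBP Δ

/-!
Say `m ∈ C₁ \ C₂` with `c < m` and put `A = (C₁ ∪ C₂) \ {c}`. If `A` were a face, shifting `m` down
to `c` would give the face `(A \ {m}) ∪ {c}`, which contains the non-face `C₂`. So `A` is a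
non-face, and any minimal non-face inside it is the required circuit.
-/

open Finset

def IsShiftedOn (E : Finset α) (Δ : Finset α → Prop) : Prop :=
  ∀ B, Δ B → ∀ i ∈ E, ∀ j ∈ E, i < j → i ∉ B → j ∈ B → Δ (insert i (B.erase j))

omit [LinearOrder α] [DecidableEq α] [Fintype α] in
lemma exists_isCircuitOn_subset {E : Finset α} {Δ : Finset α → Prop} {A : Finset α}
    (hAE : A ⊆ E) (hA : ¬ Δ A) : ∃ C, IsCircuitOn E Δ C ∧ C ⊆ A := by
  obtain ⟨C, hCA, hC⟩ := exists_minimal_le_of_wellFoundedLT (fun s ↦ ¬ Δ s) A hA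
  obtain ⟨hnC, hmin⟩ := minimal_iff_forall_lt.1 hC
  exact ⟨C, ⟨hCA.trans hAE, hnC, fun D hD ↦ not_not.1 (hmin hD)⟩, hCA⟩

omit [Fintype α] in
lemma IsShiftedOn.not_face_of_erase_subset {E : Finset α} {Δ : Finset α → Prop}
    (hΔ : IsComplex Δ) (hshift : IsShiftedOn E Δ) {A C : Finset α} {c m : α}
    (hcE : c ∈ E) (hmE : m ∈ E) (hcm : c < m) (hC : ¬ Δ C) (hmC : m ∉ C)
    (hCA : C.erase c ⊆ A) (hcA : c ∉ A) (hmA : m ∈ A) : ¬ Δ A := by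
  intro hA
  refine hC (hΔ (hshift A hA c hcE m hmE hcm hcA hmA) fun x hx ↦ ?_)
  rcases eq_or_ne x c with rfl | hxc
  · exact mem_insert_self x _
  · exact mem_insert_of_mem (mem_erase.2 ⟨ne_of_mem_of_not_mem hx hmC, hCA (mem_erase.2 ⟨hxc, hx⟩)⟩)

theorem stmt1_general (E : Finset α) (Δ : Finset α → Prop) (hΔ : IsComplexOn E Δ)
    (hshift : ∀ B, Δ B → ∀ i ∈ E, ∀ j ∈ E, i < j → i ∉ B → j ∈ B →
      Δ (insert i (B.erase j))) :
    QCon E Δ := by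
  intro C₁ C₂ h₁ h₂ _ c hc ⟨m, hm, hcm⟩
  have hUE : C₁ ∪ C₂ ⊆ E := union_subset h₁.1 h₂.1
  have hcE : c ∈ E := h₁.1 (mem_inter.1 hc).1
  obtain ⟨C, hC, hmC, hCU⟩ : ∃ C, ¬ Δ C ∧ m ∉ C ∧ C ⊆ C₁ ∪ C₂ := by
    rcases mem_symmDiff.1 hm with ⟨-, hm₂⟩ | ⟨-, hm₁⟩
    · exact ⟨C₂, h₂.2.1, hm₂, subset_union_right⟩
    · exact ⟨C₁, h₁.2.1, hm₁, subset_union_left⟩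
  have hmU : m ∈ C₁ ∪ C₂ := symmDiff_le_sup (a := C₁) (b := C₂) hm
  have hA : ¬ Δ ((C₁ ∪ C₂).erase c) :=
    IsShiftedOn.not_face_of_erase_subset hΔ.2 hshift hcE (hUE hmU) hcm
      hC hmC (erase_subset_erase c hCU) (notMem_erase c _) (mem_erase.2 ⟨hcm.ne', hmU⟩)
  exact exists_isCircuitOn_subset ((erase_subset c _).trans hUE) hA

/-- A pure shifted simplicial complex satisfies the quasi-circuit axiom. -/
theorem stmt1 (E : Finset α) (Δ : Finset α → Prop) (hΔ : IsComplexOn E Δ)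
    (hpure : IsPure Δ)
    (hshift : ∀ B, Δ B → ∀ i ∈ E, ∀ j ∈ E, i < j → i ∉ B → j ∈ B →
      Δ (insert i (B.erase j))) :
    QCon E Δ :=
  stmt1_general E Δ hΔ hshift
end

section
/- If a pure ordered complex Ψ = (E, Δ) satisfies the quasi-exchange axiom, then the lexicographically smallest facet B₀ is the unique minimal element of the Gale order on the facets. -/
/-! If a facet `B` differs from the lexicographically smallest facet `B₀`, the largest element
`m` of `B ∆ B₀` lies in `B`: were it in `B₀`, quasi-exchange applied to `B₀` and `B` would produce
a facet lexicographically smaller than `B₀`. Quasi-exchange applied to `B` and `B₀` then replaces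
`m` by a smaller element of `B₀`; this lowers `B` in the Gale order and brings it closer to `B₀`,
so iterating reaches `B₀`. The Gale order is handled through the counting functions
`t ↦ #{x ∈ B | x ≤ t}`: for sets of equal size, `B₀ ≤ B` iff `B` never has more elements
below `t` than `B₀`. -/

variable {α : Type*} [LinearOrder α] [DecidableEq α] [Fintype α]

open Finset

section Gale

variable {α : Type*} [LinearOrder α]

theorem Finset.orderEmbOfFin_le_iff_lt_card_filter (s : Finset α) (i : Fin #s) (t : α) :
    s.orderEmbOfFin rfl i ≤ t ↔ (i : ℕ) < #{x ∈ s | x ≤ t} := by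
  set f := s.orderEmbOfFin rfl
  have hcard : #{x ∈ s | x ≤ t} = #{j | f j ≤ t} := by
    conv_lhs => rw [← s.map_orderEmbOfFin_univ rfl, filter_map, card_map]
    rfl
  rw [hcard]
  constructor
  · intro hi
    calc (i : ℕ) < #(Iic i) := by simp
      _ ≤ #{j | f j ≤ t} := card_le_card fun j hj => by
        simpa using (f.monotone (mem_Iic.mp hj)).trans hi
  · intro hi
    by_contra! hlt
    have : #{j | f j ≤ t} ≤ #(Iio i) := card_le_card fun j hj => by
      simp only [mem_filter, mem_univ, true_and] at hj
      exact mem_Iio.mpr (f.lt_iff_lt.mp (hj.trans_lt hlt))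
    simp only [Fin.card_Iio] at this
    omega

theorem galeLe_of_card_filter_le {B B' : Finset α} (hcard : #B = #B')
    (hcount : ∀ t, #{x ∈ B' | x ≤ t} ≤ #{x ∈ B | x ≤ t}) : galeLe B B' := by
  rw [galeLe, List.forall₂_iff_get]
  refine ⟨by simp [hcard], fun i hi hi' => ?_⟩
  have hiff := B.orderEmbOfFin_le_iff_lt_card_filter ⟨i, by simpa using hi⟩
  have hiff' := B'.orderEmbOfFin_le_iff_lt_card_filter ⟨i, by simpa using hi'⟩
  simp only [orderEmbOfFin_apply] at hiff hiff'
  exact (hiff _).mpr (((hiff' _).mp le_rfl).trans_le (hcount _))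

end Gale

section Exchange

variable {α : Type*} [LinearOrder α] [DecidableEq α] {Δ : Finset α → Prop} {B B₀ : Finset α}

theorem card_filter_le_card_filter_insert_erase {m b : α} (hb : b ∉ B)
    (hbm : b < m) (t : α) : #{x ∈ B | x ≤ t} ≤ #{x ∈ insert b (B.erase m) | x ≤ t} := by
  rw [filter_insert, filter_erase]
  split_ifs with hbt
  · rw [card_insert_of_notMem (by simp [hb])]
    have := pred_card_le_card_erase (s := {x ∈ B | x ≤ t}) (a := m)
    omega
  · have hmt : m ∉ {x ∈ B | x ≤ t} := fun h => hbt (hbm.le.trans (mem_filter.mp h).2)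
    rw [erase_eq_of_notMem hmt]

theorem exists_max_sdiff_of_ne {B B' : Finset α} (hne : B ≠ B') :
    ∃ m, (m ∈ B \ B' ∧ ∀ b ∈ B' \ B, b < m) ∨ (m ∈ B' \ B ∧ ∀ b ∈ B \ B', b < m) := by
  have hne' : (symmDiff B B').Nonempty := nonempty_iff_ne_empty.mpr fun h =>
    hne (symmDiff_eq_bot.mp h)
  set m := (symmDiff B B').max' hne'
  have hmax : ∀ b ∈ symmDiff B B', b ≤ m := fun b hb => le_max' _ _ hb
  refine ⟨m, ?_⟩
  rcases mem_symmDiff.mp (max'_mem _ hne') with hm | hm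
  · refine Or.inl ⟨mem_sdiff.mpr hm, fun b hb => (hmax b ?_).lt_of_ne ?_⟩
    · exact mem_symmDiff.mpr (Or.inr (mem_sdiff.mp hb))
    · rintro rfl; exact (mem_sdiff.mp hb).2 hm.1
  · refine Or.inr ⟨mem_sdiff.mpr hm, fun b hb => (hmax b ?_).lt_of_ne ?_⟩
    · exact mem_symmDiff.mpr (Or.inl (mem_sdiff.mp hb))
    · rintro rfl; exact (mem_sdiff.mp hb).2 hm.1

theorem IsLexMinFacet.not_forall_lt_of_mem_sdiff (hQE : QE Δ) (hB₀ : IsLexMinFacet Δ B₀)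
    (hB : IsFacet Δ B) {m : α} (hm : m ∈ B₀ \ B) : ¬ ∀ b ∈ B \ B₀, b < m := by
  intro hlt
  obtain ⟨b, hb, hfacet⟩ := hQE hB₀.1 hB m hm hlt
  have hb₀ : b ∉ B₀ := (mem_sdiff.mp hb).2
  rcases hB₀.2 hfacet with heq | ⟨a, ha, hmin⟩
  · exact hb₀ (heq ▸ mem_insert_self b _)
  · have ham : a = m := by
      by_contra hne
      exact (mem_sdiff.mp ha).2 (mem_insert_of_mem (mem_erase.mpr ⟨hne, (mem_sdiff.mp ha).1⟩))
    have hab : a ≤ b := hmin b (mem_symmDiff.mpr (Or.inr ⟨mem_insert_self _ _, hb₀⟩))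
    exact (ham ▸ hab).not_gt (hlt b hb)

theorem IsLexMinFacet.exists_exchange (hQE : QE Δ) (hB₀ : IsLexMinFacet Δ B₀)
    (hB : IsFacet Δ B) (hne : B ≠ B₀) :
    ∃ m ∈ B \ B₀, ∃ b ∈ B₀ \ B, b < m ∧ IsFacet Δ (insert b (B.erase m)) := by
  obtain ⟨m, ⟨hm, hlt⟩ | ⟨hm, hlt⟩⟩ := exists_max_sdiff_of_ne hne
  · obtain ⟨b, hb, hfacet⟩ := hQE hB hB₀.1 m hm hlt
    exact ⟨m, hm, b, hb, hlt b hb, hfacet⟩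
  · exact (hB₀.not_forall_lt_of_mem_sdiff hQE hB hm hlt).elim

theorem IsLexMinFacet.card_filter_le (hQE : QE Δ) (hB₀ : IsLexMinFacet Δ B₀)
    (hB : IsFacet Δ B) (t : α) : #{x ∈ B | x ≤ t} ≤ #{x ∈ B₀ | x ≤ t} := by
  induction hn : #(B \ B₀) using Nat.strong_induction_on generalizing B with | _ n ih => ?_
  rcases eq_or_ne B B₀ with rfl | hne
  · rfl
  obtain ⟨m, hm, b, hb, hbm, hfacet⟩ := hB₀.exists_exchange hQE hB hne
  have hcloser : #(insert b (B.erase m) \ B₀) < n := by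
    rw [insert_sdiff_of_mem _ (mem_sdiff.mp hb).1, erase_sdiff_comm, ← hn]
    exact card_erase_lt_of_mem hm
  exact (card_filter_le_card_filter_insert_erase (mem_sdiff.mp hb).2 hbm t).trans
    (ih _ hcloser hfacet rfl)

theorem IsLexMinFacet.galeLe (hpure : IsPure Δ) (hQE : QE Δ) (hB₀ : IsLexMinFacet Δ B₀)
    (hB : IsFacet Δ B) : galeLe B₀ B :=
  galeLe_of_card_filter_le (hpure hB₀.1 hB) (hB₀.card_filter_le hQE hB)

end Exchange

theorem stmt4_general (Δ : Finset α → Prop)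
    (hpure : IsPure Δ) (hQE : QE Δ) (B₀ : Finset α) (hB₀ : IsLexMinFacet Δ B₀) :
    (∀ B, IsFacet Δ B → galeLe B₀ B) ∧
    (∀ B, IsFacet Δ B → (∀ B', IsFacet Δ B' → galeLe B' B → B' = B) → B = B₀) :=
  ⟨fun _ hB => hB₀.galeLe hpure hQE hB,
    fun _ hB hmin => (hmin B₀ hB₀.1 (hB₀.galeLe hpure hQE hB)).symm⟩

/-- in a pure complex satisfying the quasi-exchange axiom, the
lexicographically smallest facet is the unique minimal element of the Gale order. -/
theorem stmt4 (E : Finset α) (Δ : Finset α → Prop) (hΔ : IsComplexOn E Δ)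
    (hpure : IsPure Δ) (hQE : QE Δ) (B₀ : Finset α) (hB₀ : IsLexMinFacet Δ B₀) :
    (∀ B, IsFacet Δ B → galeLe B₀ B) ∧
    (∀ B, IsFacet Δ B → (∀ B', IsFacet Δ B' → galeLe B' B → B' = B) → B = B₀) :=
  stmt4_general Δ hpure hQE B₀ hB₀
end

section
/- If a pure ordered complex Ψ = (E, Δ) satisfies the quasi-exchange axiom, then the lexicographic order on its facets is a shelling order: for every pair of facets B₁ <_lex B₂ there is a facet B₃ <_lex B₂ and an element e ∈ B₂ such that B₁ ∩ B₂ ⊆ B₃ ∩ B₂ = B₂ \ {e}. -/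
variable {α : Type*} [LinearOrder α] [DecidableEq α] [Fintype α]

/-! Induction on `|B₁ \ B₂|`. Let `M` be the largest element of the symmetric difference
`B₁ ∆ B₂`; quasi-exchange applies at `M` in whichever facet contains it. If `M ∈ B₂`, it gives a
facet `B₃ = B₂ - M + b` with `b < M`, which is lexicographically below `B₂` and meets `B₂` in
`B₂ - M ⊇ B₁ ∩ B₂`. If `M ∈ B₁`, it gives a facet `B₁ - M + b` with `b ∈ B₂`: its intersection
with `B₂` grows, and since `b` lies between the minimum of `B₁ ∆ B₂` and `M`, that minimum is
untouched, so the new facet is still lexicographically below `B₂` and the induction applies. -/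

section Exchange

open Finset

variable {β : Type*} [DecidableEq β] {A B : Finset β} {a b : β}

theorem insert_erase_inter_self (hb : b ∉ B) : insert b (B.erase a) ∩ B = B.erase a := by
  ext x
  simp only [mem_inter, mem_insert, mem_erase]
  constructor
  · rintro ⟨rfl | hx, hxB⟩
    exacts [absurd hxB hb, hx]
  · exact fun hx => ⟨Or.inr hx, hx.2⟩

theorem inter_subset_insert_erase_inter (ha : a ∉ B) : A ∩ B ⊆ insert b (A.erase a) ∩ B := by
  intro x hx
  rw [mem_inter] at hx ⊢
  exact ⟨mem_insert_of_mem (mem_erase.2 ⟨ne_of_mem_of_not_mem hx.2 ha, hx.1⟩), hx.2⟩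

theorem symmDiff_insert_erase_subset (ha : a ∉ B) (hb : b ∈ B) :
    symmDiff (insert b (A.erase a)) B ⊆ symmDiff A B := by
  intro x hx
  simp only [mem_symmDiff, mem_insert, mem_erase] at hx ⊢
  grind

theorem card_insert_erase_sdiff_lt (ha : a ∈ A \ B) (hb : b ∈ B) :
    (insert b (A.erase a) \ B).card < (A \ B).card := by
  refine card_lt_card ((ssubset_iff_of_subset fun x hx => ?_).2 ⟨a, ha, ?_⟩)
  · simp only [mem_sdiff, mem_insert, mem_erase] at hx ⊢
    grind
  · simp only [mem_sdiff, mem_insert, mem_erase] at ha ⊢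
    grind

variable [LinearOrder β]

theorem lexLt_insert_erase (hlt : lexLt A B) (ha : a ∉ B) (hb : b ∈ B \ A) (hba : b < a) :
    lexLt (insert b (A.erase a)) B := by
  obtain ⟨m, hm, hmin⟩ := hlt
  have hmb : m ≤ b := hmin b (mem_symmDiff.2 (Or.inr (mem_sdiff.1 hb)))
  refine ⟨m, ?_, fun x hx => hmin x (symmDiff_insert_erase_subset ha (mem_sdiff.1 hb).1 hx)⟩
  simp only [mem_sdiff, mem_insert, mem_erase] at hm ⊢
  exact ⟨Or.inr ⟨(hmb.trans_lt hba).ne, hm.1⟩, hm.2⟩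

theorem lexLt_insert_erase_self (hb : b ∉ B) (hba : b < a) :
    lexLt (insert b (B.erase a)) B := by
  refine ⟨b, mem_sdiff.2 ⟨mem_insert_self b _, hb⟩, fun x hx => ?_⟩
  simp only [mem_symmDiff, mem_insert, mem_erase] at hx
  grind

theorem QE.exists_exchange_of_max {Δ : Finset β → Prop} (hQE : QE Δ) {B₁ B₂ : Finset β}
    (h₁ : IsFacet Δ B₁) (h₂ : IsFacet Δ B₂) (ha : a ∈ B₁ \ B₂)
    (hmax : ∀ x ∈ symmDiff B₁ B₂, x ≤ a) :
    ∃ b ∈ B₂ \ B₁, b < a ∧ IsFacet Δ (insert b (B₁.erase a)) := by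
  have hlt : ∀ b ∈ B₂ \ B₁, b < a := fun b hb =>
    (hmax b (mem_symmDiff.2 (Or.inr (mem_sdiff.1 hb)))).lt_of_ne
      (ne_of_mem_of_not_mem (mem_sdiff.1 hb).1 (mem_sdiff.1 ha).2)
  obtain ⟨b, hb, hfacet⟩ := hQE h₁ h₂ a ha hlt
  exact ⟨b, hb, hlt b hb, hfacet⟩

end Exchange

open Finset in
theorem stmt5_general (Δ : Finset α → Prop) (hQE : QE Δ) :
    ∀ B₁ B₂, IsFacet Δ B₁ → IsFacet Δ B₂ → lexLt B₁ B₂ →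
      ∃ B₃, IsFacet Δ B₃ ∧ lexLt B₃ B₂ ∧
        ∃ e ∈ B₂, B₁ ∩ B₂ ⊆ B₃ ∩ B₂ ∧ B₃ ∩ B₂ = B₂.erase e := by
  intro B₁ B₂ hB₁ hB₂ hlt
  induction hn : (B₁ \ B₂).card using Nat.strong_induction_on generalizing B₁ with
  | _ n ih =>
  have hne : (symmDiff B₁ B₂).Nonempty := by
    obtain ⟨m, hm, -⟩ := hlt
    exact ⟨m, mem_symmDiff.2 (Or.inl (mem_sdiff.1 hm))⟩
  obtain ⟨M, hM, hMmax⟩ : ∃ M ∈ symmDiff B₁ B₂, ∀ x ∈ symmDiff B₁ B₂, x ≤ M :=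
    (symmDiff B₁ B₂).exists_max_image id hne
  rcases (mem_symmDiff.1 hM).imp mem_sdiff.2 mem_sdiff.2 with hM | hM
  · obtain ⟨b, hb, hbM, hfacet⟩ := hQE.exists_exchange_of_max hB₁ hB₂ hM hMmax
    have hM₂ : M ∉ B₂ := (mem_sdiff.1 hM).2
    obtain ⟨B₃, hB₃, hlt₃, e, he, hsub, heq⟩ :=
      ih _ (hn ▸ card_insert_erase_sdiff_lt hM (mem_sdiff.1 hb).1) _ hfacet
        (lexLt_insert_erase hlt hM₂ hb hbM) rfl
    exact ⟨B₃, hB₃, hlt₃, e, he, (inter_subset_insert_erase_inter hM₂).trans hsub, heq⟩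
  · obtain ⟨b, hb, hbM, hfacet⟩ :=
      hQE.exists_exchange_of_max hB₂ hB₁ hM (by rwa [symmDiff_comm])
    have hb₂ : b ∉ B₂ := (mem_sdiff.1 hb).2
    obtain ⟨hM₂, hM₁⟩ := mem_sdiff.1 hM
    refine ⟨_, hfacet, lexLt_insert_erase_self hb₂ hbM, M, hM₂, ?_, insert_erase_inter_self hb₂⟩
    rw [insert_erase_inter_self hb₂, inter_comm]
    exact subset_erase.2 ⟨inter_subset_left, fun h => hM₁ (mem_inter.1 h).2⟩

/-- in a pure complex satisfying the quasi-exchange axiom, the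
lexicographic order on the facets is a shelling order. -/
theorem stmt5 (E : Finset α) (Δ : Finset α → Prop) (hΔ : IsComplexOn E Δ)
    (hpure : IsPure Δ) (hQE : QE Δ) :
    ∀ B₁ B₂, IsFacet Δ B₁ → IsFacet Δ B₂ → lexLt B₁ B₂ →
      ∃ B₃, IsFacet Δ B₃ ∧ lexLt B₃ B₂ ∧
        ∃ e ∈ B₂, B₁ ∩ B₂ ⊆ B₃ ∩ B₂ ∧ B₃ ∩ B₂ = B₂.erase e :=
  stmt5_general Δ hQE
end

section
/- Let Ψ = (E, Δ) be a pure ordered complex satisfying the quasi-exchange axiom, and let B, B' be facets with IP(B) ⊆ B', where IP(B) is the set of internally passive elements of B. Then B ≤_Gale B'. Consequently, the Gale order extends the internal order defined by B ≤_int B' iff IP(B) ⊆ IP(B'). -/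
variable {α : Type*} [LinearOrder α] [DecidableEq α] [Fintype α]

lemma galeLe_refl (B : Finset α) : galeLe B B :=
  List.forall₂_same.2 fun x _ => le_refl x

private lemma forall₂_le_trans : ∀ {l₁ l₂ l₃ : List α},
    List.Forall₂ (· ≤ ·) l₁ l₂ → List.Forall₂ (· ≤ ·) l₂ l₃ → List.Forall₂ (· ≤ ·) l₁ l₃
  | _, _, _, List.Forall₂.nil, List.Forall₂.nil => List.Forall₂.nil
  | _, _, _, List.Forall₂.cons h t, List.Forall₂.cons h' t' =>
      List.Forall₂.cons (le_trans h h') (forall₂_le_trans t t')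

lemma galeLe_trans {A B C : Finset α} (h1 : galeLe A B) (h2 : galeLe B C) : galeLe A C :=
  forall₂_le_trans h1 h2

/-- Counting criterion for the Gale order. -/
lemma galeLe_of_count {B B' : Finset α} (hcard : B.card = B'.card)
    (h : ∀ x, (B'.filter (· ≤ x)).card ≤ (B.filter (· ≤ x)).card) : galeLe B B' := by
  rw [galeLe, List.forall₂_iff_get]
  refine ⟨by simp [hcard], fun i h₁ h₂ => ?_⟩
  by_contra hlt
  push_neg at hlt
  set L := Finset.sort B (· ≤ ·) with hL
  set L' := Finset.sort B' (· ≤ ·) with hL'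
  set x := L'.get ⟨i, h₂⟩ with hx
  have hcntB : (B.filter (· ≤ x)).card ≤ i := by
    have : (B.filter (· ≤ x)).card ≤ (Finset.range i).card := by
      apply Finset.card_le_card_of_injOn (fun y => L.idxOf y)
      · intro y hy
        rw [Finset.mem_coe, Finset.mem_filter] at hy
        have hyL : y ∈ L := (Finset.mem_sort _).2 hy.1
        have hidx : L.idxOf y < L.length := List.idxOf_lt_length_iff.2 hyL
        rw [Finset.mem_coe, Finset.mem_range]
        by_contra hge
        push_neg at hge
        have hgety : L.get ⟨L.idxOf y, hidx⟩ = y := List.idxOf_get hidx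
        rcases eq_or_lt_of_le hge with heq | hlt'
        · have : L.get ⟨i, h₁⟩ = y := by
            rw [← hgety]; congr 1; exact Fin.ext heq
          exact absurd (le_trans (this ▸ le_refl _) hy.2) (not_le.2 (this ▸ hlt))
        · have : L.get ⟨i, h₁⟩ < y := by
            have := (B.sortedLT_sort).strictMono_get
              (show (⟨i, h₁⟩ : Fin L.length) < ⟨L.idxOf y, hidx⟩ from hlt')
            rwa [hgety] at this
          exact absurd (lt_of_le_of_lt hy.2 hlt) (not_lt.2 (le_of_lt this))
      · intro y hy z hz hyz
        rw [Finset.coe_filter, Set.mem_setOf_eq] at hy hz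
        have hyL : y ∈ L := (Finset.mem_sort _).2 hy.1
        have hzL : z ∈ L := (Finset.mem_sort _).2 hz.1
        have h1' := List.idxOf_get (List.idxOf_lt_length_iff.2 hyL)
        have h2' := List.idxOf_get (List.idxOf_lt_length_iff.2 hzL)
        rw [← h1', ← h2']
        congr 1
        exact Fin.ext hyz
    simpa using this
  have hcntB' : i + 1 ≤ (B'.filter (· ≤ x)).card := by
    have hmin : ∀ j : ℕ, min j i < L'.length := fun j =>
      lt_of_le_of_lt (min_le_right j i) h₂
    have : (Finset.range (i + 1)).card ≤ (B'.filter (· ≤ x)).card := by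
      apply Finset.card_le_card_of_injOn (fun j => L'.get ⟨min j i, hmin j⟩)
      · intro j hj
        rw [Finset.mem_coe, Finset.mem_range] at hj
        rw [Finset.mem_coe, Finset.mem_filter]
        constructor
        · exact (Finset.mem_sort _).1 (L'.get_mem _)
        · rcases eq_or_lt_of_le (min_le_right j i) with heq | hlt'
          · rw [hx]
            apply le_of_eq
            congr 1
            simp only [heq]
          · exact le_of_lt ((B'.sortedLT_sort).strictMono_get
              (show (⟨min j i, hmin j⟩ : Fin L'.length) < ⟨i, h₂⟩ from hlt'))
      · intro j hj k hk hjk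
        rw [Finset.coe_range, Set.mem_Iio] at hj hk
        have hj' : min j i = j := min_eq_left (Nat.lt_succ_iff.1 hj)
        have hk' : min k i = k := min_eq_left (Nat.lt_succ_iff.1 hk)
        have := (B'.sortedLT_sort).strictMono_get.injective hjk
        rw [Fin.mk.injEq, hj', hk'] at this
        exact this
    simpa using this
  have := le_trans hcntB' (h x)
  omega

/-- Replacing an element of a set by a smaller one goes down in the Gale order. -/
lemma galeLe_exchange {s : Finset α} {b c : α} (hb : b ∈ s) (hc : c ∉ s) (hcb : c < b) :
    galeLe (insert c (s.erase b)) s := by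
  have hce : c ∉ s.erase b := fun h => hc (Finset.mem_of_mem_erase h)
  have hpos : 0 < s.card := Finset.card_pos.2 ⟨b, hb⟩
  apply galeLe_of_count
  · rw [Finset.card_insert_of_notMem hce, Finset.card_erase_of_mem hb]
    omega
  · intro x
    rw [Finset.filter_insert]
    by_cases hcx : c ≤ x
    · rw [if_pos hcx, Finset.filter_erase]
      have hce' : c ∉ (Finset.filter (· ≤ x) s).erase b := fun h =>
        hc (Finset.mem_filter.1 (Finset.mem_of_mem_erase h)).1
      rw [Finset.card_insert_of_notMem hce']
      have := Finset.pred_card_le_card_erase (s := Finset.filter (· ≤ x) s) (a := b)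
      omega
    · rw [if_neg hcx, Finset.filter_erase]
      have hbx : b ∉ Finset.filter (· ≤ x) s := fun h =>
        hcx (le_trans (le_of_lt hcb) (Finset.mem_filter.1 h).2)
      rw [Finset.erase_eq_of_notMem hbx]

/-- The key induction: if all internally passive elements of `B` lie in `B'`,
then `B ≤_Gale B'`. -/
lemma key_galeLe {Δ : Finset α → Prop} (hQE : QE Δ) :
    ∀ n (B B' : Finset α), (symmDiff B B').card ≤ n →
      IsFacet Δ B → IsFacet Δ B' →
      (∀ b, InternallyPassive Δ B b → b ∈ B') → galeLe B B' := by
  intro n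
  induction n with
  | zero =>
    intro B B' hn hB hB' _
    have h0 : symmDiff B B' = ∅ := Finset.card_eq_zero.1 (Nat.le_zero.1 hn)
    have : B = B' := by
      rwa [← Finset.bot_eq_empty, symmDiff_eq_bot] at h0
    exact this ▸ galeLe_refl B
  | succ n ih =>
    intro B B' hn hB hB' hIP
    by_cases heq : B = B'
    · exact heq ▸ galeLe_refl B
    have hne : (symmDiff B B').Nonempty := by
      rw [Finset.nonempty_iff_ne_empty]
      intro h
      exact heq (by rwa [← Finset.bot_eq_empty, symmDiff_eq_bot] at h)
    set b₁ := (symmDiff B B').max' hne with hb₁def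
    have hb₁ : b₁ ∈ symmDiff B B' := Finset.max'_mem _ _
    have hmax : ∀ y ∈ symmDiff B B', y ≤ b₁ := fun y hy => Finset.le_max' _ y hy
    have hb₁' : b₁ ∈ B' ∧ b₁ ∉ B := by
      rcases Finset.mem_symmDiff.1 hb₁ with ⟨h1, h2⟩ | hh
      · exfalso
        obtain ⟨b₂, hb₂, hfac⟩ := hQE hB hB' b₁ (Finset.mem_sdiff.2 ⟨h1, h2⟩)
          (by
            intro b hbmem
            rw [Finset.mem_sdiff] at hbmem
            have hbs : b ∈ symmDiff B B' :=
              Finset.mem_symmDiff.2 (Or.inr ⟨hbmem.1, hbmem.2⟩)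
            rcases lt_or_eq_of_le (hmax b hbs) with h | h
            · exact h
            · exact absurd (h ▸ hbmem.1) h2)
        rw [Finset.mem_sdiff] at hb₂
        have hb₂s : b₂ ∈ symmDiff B B' :=
          Finset.mem_symmDiff.2 (Or.inr ⟨hb₂.1, hb₂.2⟩)
        have hlt : b₂ < b₁ := by
          rcases lt_or_eq_of_le (hmax b₂ hb₂s) with h | h
          · exact h
          · exact absurd (h ▸ hb₂.2) (fun hc => hc h1)
        exact h2 (hIP b₁ ⟨h1, b₂, hlt, hb₂.2, hfac⟩)
      · exact ⟨hh.1, hh.2⟩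
    obtain ⟨b₂, hb₂, hfac⟩ := hQE hB' hB b₁ (Finset.mem_sdiff.2 ⟨hb₁'.1, hb₁'.2⟩)
      (by
        intro b hbmem
        rw [Finset.mem_sdiff] at hbmem
        have hbs : b ∈ symmDiff B B' :=
          Finset.mem_symmDiff.2 (Or.inl ⟨hbmem.1, hbmem.2⟩)
        rcases lt_or_eq_of_le (hmax b hbs) with h | h
        · exact h
        · exact absurd (h ▸ hbmem.1) hb₁'.2)
    rw [Finset.mem_sdiff] at hb₂
    have hb₂s : b₂ ∈ symmDiff B B' :=
      Finset.mem_symmDiff.2 (Or.inl ⟨hb₂.1, hb₂.2⟩)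
    have hlt : b₂ < b₁ := by
      rcases lt_or_eq_of_le (hmax b₂ hb₂s) with h | h
      · exact h
      · exact absurd (h ▸ hb₂.1) hb₁'.2
    set B'' := insert b₂ (B'.erase b₁) with hB''def
    have hIP'' : ∀ b, InternallyPassive Δ B b → b ∈ B'' := by
      intro b hb
      have hbB' := hIP b hb
      have hbB := hb.1
      have hne₁ : b ≠ b₁ := fun h => hb₁'.2 (h ▸ hbB)
      exact Finset.mem_insert_of_mem (Finset.mem_erase.2 ⟨hne₁, hbB'⟩)
    have hsub : symmDiff B B'' ⊆ (symmDiff B B').erase b₁ := by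
      intro y hy
      rcases Finset.mem_symmDiff.1 hy with ⟨hy1, hy2⟩ | ⟨hy1, hy2⟩
      · -- y ∈ B, y ∉ B''
        rw [hB''def, Finset.mem_insert, Finset.mem_erase] at hy2
        push_neg at hy2
        have hyne₁ : y ≠ b₁ := fun h => hb₁'.2 (h ▸ hy1)
        have hyB' : y ∉ B' := fun h => hy2.2 hyne₁ h
        exact Finset.mem_erase.2 ⟨hyne₁, Finset.mem_symmDiff.2 (Or.inl ⟨hy1, hyB'⟩)⟩
      · -- y ∈ B'', y ∉ B
        rw [hB''def, Finset.mem_insert, Finset.mem_erase] at hy1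
        rcases hy1 with rfl | ⟨hyne₁, hyB'⟩
        · exact absurd hb₂.1 hy2
        · exact Finset.mem_erase.2 ⟨hyne₁, Finset.mem_symmDiff.2 (Or.inr ⟨hyB', hy2⟩)⟩
    have hcard'' : (symmDiff B B'').card ≤ n := by
      have h1 := Finset.card_le_card hsub
      have h2 : ((symmDiff B B').erase b₁).card = (symmDiff B B').card - 1 :=
        Finset.card_erase_of_mem hb₁
      have h3 : 0 < (symmDiff B B').card := Finset.card_pos.2 ⟨b₁, hb₁⟩
      omega
    have hmid : galeLe B B'' := ih B B'' hcard'' hB hfac hIP''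
    exact galeLe_trans hmid (galeLe_exchange hb₁'.1 hb₂.2 hlt)

/-- for a pure complex satisfying the quasi-exchange axiom, if
`IP(B) ⊆ B'` then `B ≤_Gale B'`; consequently the Gale order extends the internal order. -/
theorem stmt6 (E : Finset α) (Δ : Finset α → Prop) (hΔ : IsComplexOn E Δ)
    (hpure : IsPure Δ) (hQE : QE Δ) (B B' : Finset α)
    (hB : IsFacet Δ B) (hB' : IsFacet Δ B')
    (hsub : ∀ b, InternallyPassive Δ B b → b ∈ B') :
    galeLe B B' ∧
    (∀ B₁ B₂, IsFacet Δ B₁ → IsFacet Δ B₂ →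
      (∀ b, InternallyPassive Δ B₁ b → InternallyPassive Δ B₂ b) → galeLe B₁ B₂) := by
  constructor
  · exact key_galeLe hQE _ B B' le_rfl hB hB' hsub
  · intro B₁ B₂ h1 h2 h12
    exact key_galeLe hQE _ B₁ B₂ le_rfl h1 h2 fun b hb => (h12 b hb).1
end

section
/- Let Ψ = (E, Δ) be a pure ordered complex satisfying the quasi-exchange axiom and let 𝒥 be an order ideal of the Gale order on the facets of Ψ. Then the complex generated by the facets in 𝒥 also satisfies the quasi-exchange axiom, and for every facet B ∈ 𝒥 the internally passive set of B in the truncated complex equals its internally passive set in Ψ. -/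
variable {α : Type*} [LinearOrder α] [DecidableEq α] [Fintype α]

section GaleAux
variable {α : Type*} [LinearOrder α] [DecidableEq α]

lemma count_le_of_get_le {S : Finset α} {i : ℕ} (h : i < (Finset.sort S (· ≤ ·)).length) :
    i + 1 ≤ (S.filter (· ≤ (Finset.sort S (· ≤ ·)).get ⟨i, h⟩)).card := by
  set l := Finset.sort S (· ≤ ·) with hl
  have hsub : (l.take (i+1)).toFinset ⊆ S.filter (· ≤ l.get ⟨i, h⟩) := by
    intro y hy
    rw [List.mem_toFinset, List.mem_take_iff_getElem] at hy
    obtain ⟨j, hj, rfl⟩ := hy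
    have hjl : j < l.length := lt_of_lt_of_le hj (min_le_right _ _)
    refine Finset.mem_filter.mpr ⟨?_, ?_⟩
    · exact (Finset.mem_sort _).mp (List.getElem_mem _)
    · have hji : (⟨j, hjl⟩ : Fin l.length) ≤ ⟨i, h⟩ :=
        Nat.lt_succ_iff.mp (lt_of_lt_of_le hj (min_le_left _ _))
      have := (S.pairwise_sort (· ≤ ·)).sortedLE.monotone_get hji
      simpa using this
  have hnd : (l.take (i+1)).Nodup :=
    List.Nodup.sublist (List.take_sublist _ _) (S.sort_nodup (· ≤ ·))
  calc i + 1 = (l.take (i+1)).length := by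
        rw [List.length_take]; omega
    _ = (l.take (i+1)).toFinset.card := (List.toFinset_card_of_nodup hnd).symm
    _ ≤ _ := Finset.card_le_card hsub

lemma get_le_of_count {T : Finset α} {i : ℕ} (h : i < (Finset.sort T (· ≤ ·)).length) {x : α}
    (hc : i + 1 ≤ (T.filter (· ≤ x)).card) :
    (Finset.sort T (· ≤ ·)).get ⟨i, h⟩ ≤ x := by
  by_contra hx
  push_neg at hx
  set l := Finset.sort T (· ≤ ·) with hl
  have hsub : T.filter (· ≤ x) ⊆ (l.take i).toFinset := by
    intro y hy
    rw [Finset.mem_filter] at hy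
    obtain ⟨hyT, hyx⟩ := hy
    have hyl : y ∈ l := (Finset.mem_sort _).mpr hyT
    obtain ⟨j, hj, rfl⟩ := List.mem_iff_getElem.mp hyl
    rw [List.mem_toFinset, List.mem_take_iff_getElem]
    refine ⟨j, ?_, rfl⟩
    have hji : j < i := by
      by_contra hge
      push_neg at hge
      have hij : (⟨i, h⟩ : Fin l.length) ≤ ⟨j, hj⟩ := hge
      have hmono := (T.pairwise_sort (· ≤ ·)).sortedLE.monotone_get hij
      simp only [List.get_eq_getElem] at hmono
      exact absurd (le_trans hmono hyx) (not_le.mpr hx)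
    omega
  have h1 := Finset.card_le_card hsub
  have h2 : (l.take i).toFinset.card ≤ i :=
    le_trans (List.toFinset_card_le _) (by rw [List.length_take]; omega)
  omega

lemma galeLe_of_counts {T S : Finset α} (hcard : T.card = S.card)
    (h : ∀ x, (S.filter (· ≤ x)).card ≤ (T.filter (· ≤ x)).card) :
    galeLe T S := by
  rw [galeLe, List.forall₂_iff_get]
  refine ⟨by simp [Finset.length_sort, hcard], ?_⟩
  intro i h₁ h₂
  exact get_le_of_count h₁ (le_trans (count_le_of_get_le h₂) (h _))

lemma galeLe_swap {B : Finset α} {a b : α} (hb : b ∈ B) (ha : a ∉ B) (hab : a < b) :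
    galeLe (insert a (B.erase b)) B := by
  have haeb : a ∉ B.erase b := fun hmem => ha (Finset.mem_of_mem_erase hmem)
  apply galeLe_of_counts
  · rw [Finset.card_insert_of_notMem haeb, Finset.card_erase_of_mem hb]
    have h1 : 1 ≤ B.card := Finset.card_pos.mpr ⟨b, hb⟩
    omega
  · intro x
    by_cases hbx : b ≤ x
    · have hax : a ≤ x := (hab.trans_le hbx).le
      have h1 : Finset.filter (· ≤ x) (insert a (B.erase b))
          = insert a ((Finset.filter (· ≤ x) B).erase b) := by
        rw [Finset.filter_insert, if_pos hax, Finset.filter_erase]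
      rw [h1]
      have hbf : b ∈ Finset.filter (· ≤ x) B := Finset.mem_filter.mpr ⟨hb, hbx⟩
      have hpos : 1 ≤ (Finset.filter (· ≤ x) B).card := Finset.card_pos.mpr ⟨b, hbf⟩
      have haf : a ∉ (Finset.filter (· ≤ x) B).erase b :=
        fun hmem => ha (Finset.mem_filter.mp (Finset.mem_of_mem_erase hmem)).1
      rw [Finset.card_insert_of_notMem haf, Finset.card_erase_of_mem hbf]
      omega
    · apply Finset.card_le_card
      intro y hy
      rw [Finset.mem_filter] at hy ⊢
      refine ⟨Finset.mem_insert_of_mem (Finset.mem_erase.mpr ⟨?_, hy.1⟩), hy.2⟩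
      rintro rfl; exact hbx hy.2

end GaleAux

/-- a Gale truncation of a pure complex satisfying the quasi-exchange
axiom satisfies the quasi-exchange axiom, and internally passive sets are preserved. -/
theorem stmt7 (E : Finset α) (Δ : Finset α → Prop) (hΔ : IsComplexOn E Δ)
    (hpure : IsPure Δ) (hQE : QE Δ) (𝒥 : Finset α → Prop)
    (h𝒥 : ∀ B, 𝒥 B → IsFacet Δ B)
    (hdown : ∀ B B', 𝒥 B → IsFacet Δ B' → galeLe B' B → 𝒥 B') :
    QE (fun s => ∃ B, 𝒥 B ∧ s ⊆ B) ∧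
    ∀ B, 𝒥 B → ∀ b,
      (InternallyPassive (fun s => ∃ B', 𝒥 B' ∧ s ⊆ B') B b ↔ InternallyPassive Δ B b) := by
  have hfacet : ∀ B, 𝒥 B → IsFacet (fun s => ∃ B', 𝒥 B' ∧ s ⊆ B') B := by
    intro B hB
    refine ⟨⟨B, hB, subset_rfl⟩, ?_⟩
    rintro C ⟨B'', hB'', hC⟩ hBC
    have hΔC : Δ C := hΔ.2 (h𝒥 B'' hB'').1 hC
    exact (h𝒥 B hB).2 hΔC hBC
  have hfacet' : ∀ B, IsFacet (fun s => ∃ B', 𝒥 B' ∧ s ⊆ B') B → 𝒥 B := by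
    rintro B ⟨⟨B'', hB'', hsub⟩, hmax⟩
    have : B = B'' := hmax ⟨B'', hB'', subset_rfl⟩ hsub
    rw [this]; exact hB''
  constructor
  · intro B₁ B₂ hB₁ hB₂ b₁ hb₁ hlt
    have hJ₁ := hfacet' _ hB₁
    have hJ₂ := hfacet' _ hB₂
    obtain ⟨b₂, hb₂, hfac⟩ := hQE (h𝒥 _ hJ₁) (h𝒥 _ hJ₂) b₁ hb₁ hlt
    have hmem := Finset.mem_sdiff.mp hb₂
    have hgale : galeLe (insert b₂ (B₁.erase b₁)) B₁ :=
      galeLe_swap (Finset.mem_sdiff.mp hb₁).1 hmem.2 (hlt b₂ hb₂)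
    exact ⟨b₂, hb₂, hfacet _ (hdown B₁ _ hJ₁ hfac hgale)⟩
  · intro B hB b
    constructor
    · rintro ⟨hbB, b', hlt, hb', hfac⟩
      exact ⟨hbB, b', hlt, hb', h𝒥 _ (hfacet' _ hfac)⟩
    · rintro ⟨hbB, b', hlt, hb', hfac⟩
      exact ⟨hbB, b', hlt, hb',
        hfacet _ (hdown B _ hB hfac (galeLe_swap hbB hb' hlt))⟩
end

section
/- Let Ψ = (E, Δ) be an ordered complex satisfying the quasi-circuit axiom. If B is a facet and e ∈ E \ B is externally active with respect to B (i.e., there is a circuit C ⊆ B ∪ {e} with e = min C), then there is exactly one circuit contained in B ∪ {e}. -/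
/-! Every circuit inside `B ∪ {e}` contains `e`, because `B` is a face. If `C` is the active
circuit and `C'` is another one, then `e = min C` and `C ⊄ C'`, so the quasi-circuit axiom
eliminates `e` from `C ∪ C'` and produces a circuit inside the face `B`. -/

variable {α : Type*} [LinearOrder α] [DecidableEq α] [Fintype α]

section Circuits

variable {β : Type*} {E : Finset β} {Δ : Finset β → Prop}

theorem IsCircuitOn.not_subset_of_face (hΔ : IsComplex Δ) {C F : Finset β}
    (hC : IsCircuitOn E Δ C) (hF : Δ F) : ¬ C ⊆ F :=
  fun hCF => hC.2.1 (hΔ hF hCF)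

theorem IsCircuitOn.eq_of_subset {C C' : Finset β} (hC : IsCircuitOn E Δ C)
    (hC' : IsCircuitOn E Δ C') (h : C ⊆ C') : C = C' := by
  by_contra hne
  exact hC.2.1 (hC'.2.2 (Finset.ssubset_iff_subset_ne.mpr ⟨h, hne⟩))

theorem IsCircuitOn.mem_of_subset_insert [DecidableEq β] (hΔ : IsComplex Δ) {C B : Finset β}
    {e : β} (hC : IsCircuitOn E Δ C) (hB : Δ B) (hCB : C ⊆ insert e B) : e ∈ C := by
  by_contra he
  exact hC.not_subset_of_face hΔ hB ((Finset.subset_insert_iff_of_notMem he).mp hCB)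

/-- Distinct circuits are incomparable, so `C₁ \ C₂` supplies the element above `c` that the
quasi-circuit axiom asks for. -/
theorem QCon.exists_circuit_subset_erase_of_le [LinearOrder β] [DecidableEq β] (hQC : QCon E Δ)
    {C₁ C₂ : Finset β} (hC₁ : IsCircuitOn E Δ C₁) (hC₂ : IsCircuitOn E Δ C₂) (hne : C₁ ≠ C₂)
    {c : β} (hc₁ : c ∈ C₁) (hc₂ : c ∈ C₂) (hmin : ∀ x ∈ C₁, c ≤ x) :
    ∃ C₃, IsCircuitOn E Δ C₃ ∧ C₃ ⊆ (C₁ ∪ C₂).erase c := by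
  obtain ⟨m, hmC₁, hmC₂⟩ := Finset.not_subset.mp fun h => hne (hC₁.eq_of_subset hC₂ h)
  have hcm : c < m := (hmin m hmC₁).lt_of_ne fun h => hmC₂ (h ▸ hc₂)
  exact hQC hC₁ hC₂ hne c (Finset.mem_inter.mpr ⟨hc₁, hc₂⟩)
    ⟨m, Finset.mem_symmDiff.mpr (Or.inl ⟨hmC₁, hmC₂⟩), hcm⟩

end Circuits

theorem stmt8_general (E : Finset α) (Δ : Finset α → Prop) (hΔ : IsComplexOn E Δ)
    (hQC : QCon E Δ) (B : Finset α) (hB : IsFacet Δ B) (e : α)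
    (hact : ∃ C, IsCircuitOn E Δ C ∧ C ⊆ insert e B ∧ e ∈ C ∧ ∀ x ∈ C, e ≤ x) :
    ∃! C, IsCircuitOn E Δ C ∧ C ⊆ insert e B := by
  obtain ⟨C, hC, hCB, heC, hmin⟩ := hact
  refine ⟨C, ⟨hC, hCB⟩, fun C' ⟨hC', hC'B⟩ => ?_⟩
  by_contra hne
  have heC' : e ∈ C' := hC'.mem_of_subset_insert hΔ.2 hB.1 hC'B
  obtain ⟨C₃, hC₃, hC₃sub⟩ :=
    hQC.exists_circuit_subset_erase_of_le hC hC' (Ne.symm hne) heC heC' hmin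
  have hunion : (C ∪ C').erase e ⊆ B := by
    rw [← Finset.subset_insert_iff]
    exact Finset.union_subset hCB hC'B
  exact hC₃.not_subset_of_face hΔ.2 hB.1 (hC₃sub.trans hunion)

/-- in a complex satisfying the quasi-circuit axiom, if `e ∉ B` is
externally active with respect to a facet `B`, then there is exactly one circuit
contained in `B ∪ {e}`. -/
theorem stmt8 (E : Finset α) (Δ : Finset α → Prop) (hΔ : IsComplexOn E Δ)
    (hQC : QCon E Δ) (B : Finset α) (hB : IsFacet Δ B) (e : α) (heE : e ∈ E) (heB : e ∉ B)
    (hact : ∃ C, IsCircuitOn E Δ C ∧ C ⊆ insert e B ∧ e ∈ C ∧ ∀ x ∈ C, e ≤ x) :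
    ∃! C, IsCircuitOn E Δ C ∧ C ⊆ insert e B :=
  stmt8_general E Δ hΔ hQC B hB e hact
end

section
/- If M is a matroid on a totally ordered ground set E, then for every basis B, the set of internally active elements of B is contained in the lexicographically smallest basis B₀. -/
/-!
Let `b ∈ B` be internally active. Every `x < b` outside `B` lies in the closure of `B \ {b}`,
since otherwise `B - b + x` would be a basis, so `b` is not in the closure of `{x | x < b}`.
If `b ∉ B₀`, then `(B₀ ∩ {x | x < b}) ∪ {b}` is therefore independent and extends to a basis `B₁`;
as `b ∈ B₁ \ B₀`, the first element where `B₀` and `B₁` differ lies in `B₁`, so `B₁` comes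
before `B₀` lexicographically.
-/

variable {α : Type*} [LinearOrder α] [DecidableEq α] [Fintype α]

namespace Matroid

/-- The ground set is all of `β`: elements lying in no member of `ℬ` become loops. -/
def ofFinsetBases {β : Type*} [DecidableEq β] (ℬ : Finset β → Prop) (hne : ∃ B, ℬ B)
    (hexch : ∀ B₁ B₂, ℬ B₁ → ℬ B₂ → ∀ b₁ ∈ B₁ \ B₂,
      ∃ b₂ ∈ B₂ \ B₁, ℬ (insert b₂ (B₁.erase b₁))) : Matroid β :=
  Matroid.ofExistsFiniteIsBase Set.univ (fun X ↦ ∃ F : Finset β, ℬ F ∧ ↑F = X)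
    (let ⟨B, hB⟩ := hne; ⟨B, ⟨B, hB, rfl⟩, B.finite_toSet⟩)
    (by
      rintro _ _ ⟨F₁, hF₁, rfl⟩ ⟨F₂, hF₂, rfl⟩ a ha
      obtain ⟨b, hb, hbase⟩ := hexch F₁ F₂ hF₁ hF₂ a (by simpa using ha)
      exact ⟨b, by simpa using hb, _, hbase, by simp⟩)
    (fun _ _ ↦ Set.subset_univ _)

section ofFinsetBases

variable {β : Type*} [DecidableEq β] {ℬ : Finset β → Prop} {hne : ∃ B, ℬ B}
  {hexch : ∀ B₁ B₂, ℬ B₁ → ℬ B₂ → ∀ b₁ ∈ B₁ \ B₂, ∃ b₂ ∈ B₂ \ B₁, ℬ (insert b₂ (B₁.erase b₁))}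

theorem ofFinsetBases_isBase_iff {X : Set β} :
    (ofFinsetBases ℬ hne hexch).IsBase X ↔ ∃ F : Finset β, ℬ F ∧ ↑F = X :=
  Iff.rfl

theorem ofFinsetBases_isBase_coe_iff {F : Finset β} :
    (ofFinsetBases ℬ hne hexch).IsBase ↑F ↔ ℬ F := by
  simp [ofFinsetBases_isBase_iff]

end ofFinsetBases

theorem IsBase.notMem_closure_Iio {β : Type*} [LinearOrder β] {M : Matroid β} {B : Set β} {b : β}
    (hB : M.IsBase B) (hb : b ∈ B) (hact : ∀ x < b, x ∉ B → ¬ M.IsBase (insert x (B \ {b}))) :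
    b ∉ M.closure (Set.Iio b) := by
  have hIio : Set.Iio b ∩ M.E ⊆ M.closure (B \ {b}) := by
    rintro x ⟨hxb, hxE⟩
    by_cases hxB : x ∈ B
    · exact M.subset_closure _ (Set.sdiff_subset.trans hB.subset_ground) ⟨hxB, hxb.ne⟩
    by_contra hxcl
    have hindep := ((hB.indep.sdiff {b}).insert_indep_iff_of_notMem fun h ↦ hxB h.1).2 ⟨hxE, hxcl⟩
    exact hact x hxb hxB (hB.exchange_isBase_of_indep hxB hindep)
  rw [← closure_inter_ground]
  exact fun hbcl ↦ hB.indep.notMem_closure_sdiff_of_mem hb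
    (M.closure_subset_closure_of_subset_closure hIio hbcl)

theorem Indep.exists_isBase_insert_subset {β : Type*} {M : Matroid β} {I X : Set β} {e : β}
    (hI : M.Indep I) (hIX : I ⊆ X) (he : e ∈ M.E) (heX : e ∉ M.closure X) :
    ∃ B, M.IsBase B ∧ insert e I ⊆ B :=
  (hI.insert_indep_iff.2 <| .inl ⟨he, fun h ↦ heX (M.closure_mono hIX h)⟩).exists_isBase_superset

end Matroid

theorem lexLe.mem_of_forall_lt_mem {β : Type*} [LinearOrder β] [DecidableEq β]
    {B₀ B₁ : Finset β} {b : β} (hle : lexLe B₀ B₁) (hb : b ∈ B₁)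
    (hlow : ∀ a ∈ B₀, a < b → a ∈ B₁) : b ∈ B₀ := by
  obtain rfl | ⟨a, ha, hmin⟩ := hle
  · exact hb
  by_contra hbB₀
  rw [Finset.mem_sdiff] at ha
  have hab : a ≤ b := hmin b (Finset.mem_symmDiff.2 (.inr ⟨hb, hbB₀⟩))
  exact ha.2 (hlow a ha.1 (hab.lt_of_ne fun h ↦ hbB₀ (h ▸ ha.1)))

theorem stmt10_general (ℬ : Finset α → Prop)
    (hexch : ∀ B₁ B₂, ℬ B₁ → ℬ B₂ → ∀ b₁ ∈ B₁ \ B₂,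
      ∃ b₂ ∈ B₂ \ B₁, ℬ (insert b₂ (B₁.erase b₁)))
    (B₀ : Finset α) (hB₀ : ℬ B₀) (hmin : ∀ B, ℬ B → lexLe B₀ B) :
    ∀ B, ℬ B → ∀ b ∈ B,
      (¬ ∃ b', b' < b ∧ b' ∉ B ∧ ℬ (insert b' (B.erase b))) → b ∈ B₀ := by
  intro B hB b hbB hact
  let M := Matroid.ofFinsetBases ℬ ⟨B, hB⟩ hexch
  have hbcl : b ∉ M.closure (Set.Iio b) := by
    refine (Matroid.ofFinsetBases_isBase_coe_iff.2 hB).notMem_closure_Iio hbB ?_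
    intro x hxb hxB hbase
    rw [← Finset.coe_erase, ← Finset.coe_insert, Matroid.ofFinsetBases_isBase_coe_iff] at hbase
    exact hact ⟨x, hxb, hxB, hbase⟩
  obtain ⟨_, hX, hsub⟩ := ((Matroid.ofFinsetBases_isBase_coe_iff.2 hB₀).indep.subset
    Set.inter_subset_left).exists_isBase_insert_subset Set.inter_subset_right trivial hbcl
  obtain ⟨B₁, hB₁, rfl⟩ := Matroid.ofFinsetBases_isBase_iff.1 hX
  exact (hmin B₁ hB₁).mem_of_forall_lt_mem (hsub (Set.mem_insert b _))
    fun a ha hab ↦ hsub (Set.mem_insert_of_mem b ⟨ha, hab⟩)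

/-- for a matroid on a totally ordered ground set, the internally
active elements of any basis are contained in the lexicographically smallest basis. -/
theorem stmt10 (E : Finset α) (ℬ : Finset α → Prop)
    (hground : ∀ B, ℬ B → B ⊆ E) (hne : ∃ B, ℬ B)
    (hexch : ∀ B₁ B₂, ℬ B₁ → ℬ B₂ → ∀ b₁ ∈ B₁ \ B₂,
      ∃ b₂ ∈ B₂ \ B₁, ℬ (insert b₂ (B₁.erase b₁)))
    (B₀ : Finset α) (hB₀ : ℬ B₀) (hmin : ∀ B, ℬ B → lexLe B₀ B) :
    ∀ B, ℬ B → ∀ b ∈ B,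
      (¬ ∃ b', b' < b ∧ b' ∉ B ∧ ℬ (insert b' (B.erase b))) → b ∈ B₀ :=
  stmt10_general ℬ hexch B₀ hB₀ hmin
end

section
/- Every matroid on a totally ordered ground set satisfies the First Basis Property: for every element v not in the lexicographically smallest basis B₀ and not a loop, the lexicographically smallest basis of the contraction M/v that contains v, minus v, is contained in B₀. Equivalently, if B is the lexicographically smallest basis containing v, then B \ {v} ⊆ B₀. -/
variable {α : Type*} [LinearOrder α] [DecidableEq α] [Fintype α]

/-- matroids satisfy the First Basis Property: for a non-loop
`v ∉ B₀`, if `B` is the lexicographically smallest basis containing `v`, then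
`B \ {v} ⊆ B₀`. -/
theorem stmt11 (E : Finset α) (ℬ : Finset α → Prop)
    (hground : ∀ B, ℬ B → B ⊆ E) (hne : ∃ B, ℬ B)
    (hexch : ∀ B₁ B₂, ℬ B₁ → ℬ B₂ → ∀ b₁ ∈ B₁ \ B₂,
      ∃ b₂ ∈ B₂ \ B₁, ℬ (insert b₂ (B₁.erase b₁)))
    (B₀ : Finset α) (hB₀ : ℬ B₀) (hmin : ∀ B, ℬ B → lexLe B₀ B)
    (v : α) (hv : v ∉ B₀) (B : Finset α) (hB : ℬ B) (hvB : v ∈ B)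
    (hBmin : ∀ B', ℬ B' → v ∈ B' → lexLe B B') :
    B.erase v ⊆ B₀ := by
  classical
  -- Build a Mathlib matroid from the exchange axiom
  set SB : Set α → Prop := fun S => ∃ b : Finset α, ℬ b ∧ S = ↑b with hSB
  have hexch' : Matroid.ExchangeProperty SB := by
    rintro X Y ⟨b₁, hb₁, rfl⟩ ⟨b₂, hb₂, rfl⟩ a ha
    have ha' : a ∈ b₁ \ b₂ := Finset.mem_sdiff.2 ⟨by exact_mod_cast ha.1, by
      intro h; exact ha.2 (Finset.mem_coe.2 h)⟩
    obtain ⟨c, hc, hcB⟩ := hexch b₁ b₂ hb₁ hb₂ a ha'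
    refine ⟨c, ?_, insert c (b₁.erase a), hcB, ?_⟩
    · have hc' := Finset.mem_sdiff.1 hc
      exact ⟨Finset.mem_coe.2 hc'.1, fun h => hc'.2 (Finset.mem_coe.1 h)⟩
    · push_cast [Finset.coe_erase]
      rfl
  set M : Matroid α := Matroid.ofIsBaseOfFinite E.finite_toSet SB
    ⟨↑hne.choose, hne.choose, hne.choose_spec, rfl⟩ hexch'
    (by rintro S ⟨b, hb, rfl⟩; exact_mod_cast hground b hb) with hM
  have hME : M.E = ↑E := rfl
  have hMBase : ∀ S, M.IsBase S ↔ SB S := fun S => Iff.rfl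
  have hBaseB : ∀ {b : Finset α}, ℬ b → M.IsBase ↑b := fun hb => (hMBase _).2 ⟨_, hb, rfl⟩
  -- generic extension step
  have ext : ∀ (D : Finset α), ℬ D → ∀ (R : Set α), R ⊆ ↑D → ∀ e : α,
      e ∈ E → e ∉ D → e ∉ M.closure R →
      ∃ B' : Finset α, ℬ B' ∧ R ⊆ ↑B' ∧ e ∈ B' ∧ (↑B' : Set α) ⊆ insert e ↑D := by
    intro D hD R hR e heE heD hecl
    have hDbase := hBaseB hD
    have hRindep : M.Indep R := hDbase.indep.subset hR
    have heR : e ∉ R := fun h => heD (Finset.mem_coe.1 (hR h))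
    have h1 : M.Indep (insert e R) := by
      rw [hRindep.insert_indep_iff_of_notMem heR]
      exact ⟨by rw [hME]; exact Finset.mem_coe.2 heE, hecl⟩
    obtain ⟨S, hS, hsub1, hsub2⟩ := h1.exists_isBase_subset_union_isBase hDbase
    obtain ⟨B', hB', rfl⟩ := (hMBase S).1 hS
    refine ⟨B', hB', subset_trans (Set.subset_insert e R) hsub1,
      Finset.mem_coe.1 (hsub1 (Set.mem_insert e R)), ?_⟩
    refine hsub2.trans ?_
    rintro x (hx | hx)
    · rcases Set.mem_insert_iff.1 hx with h | h
      · exact Or.inl h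
      · exact Or.inr (hR h)
    · exact Or.inr hx
  -- Lemma A : lex minimality of B₀ forces closure membership
  have lemA : ∀ e, e ∈ E → e ∉ B₀ →
      (e : α) ∈ M.closure ((↑B₀ : Set α) ∩ Set.Iio e) := by
    intro e heE heB₀
    by_contra hecl
    obtain ⟨B', hB', hRB', heB', hsub⟩ :=
      ext B₀ hB₀ ((↑B₀ : Set α) ∩ Set.Iio e) Set.inter_subset_left e heE heB₀ hecl
    have key : ∀ b ∈ symmDiff B' B₀, e ≤ b := by
      intro b hb
      rcases Finset.mem_symmDiff.1 hb with ⟨hb1, hb2⟩ | ⟨hb1, hb2⟩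
      · rcases Set.mem_insert_iff.1 (hsub (Finset.mem_coe.2 hb1)) with h | h
        · exact le_of_eq h.symm
        · exact absurd (Finset.mem_coe.1 h) hb2
      · by_contra hlt
        exact hb2 (Finset.mem_coe.1 (hRB' ⟨Finset.mem_coe.2 hb1, lt_of_not_ge hlt⟩))
    rcases hmin B' hB' with heq | ⟨a, ha, hall⟩
    · exact heB₀ (heq ▸ heB')
    · have ha' := Finset.mem_sdiff.1 ha
      have h1 : a ≤ e := hall e (Finset.mem_symmDiff.2 (Or.inr ⟨heB', heB₀⟩))
      have h2 : e ≤ a := key a (Finset.mem_symmDiff.2 (Or.inr ⟨ha'.1, ha'.2⟩))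
      exact heB₀ ((le_antisymm h1 h2) ▸ ha'.1)
  -- Lemma A' : lex minimality of B among bases containing v
  have lemA' : ∀ e, e ∈ E → e ∉ B → e ≠ v →
      (e : α) ∈ M.closure (((↑B : Set α) ∩ Set.Iio e) ∪ {v}) := by
    intro e heE heB hev
    by_contra hecl
    have hRsub : ((↑B : Set α) ∩ Set.Iio e) ∪ {v} ⊆ ↑B := by
      rintro x (hx | hx)
      · exact hx.1
      · rcases hx with rfl; exact Finset.mem_coe.2 hvB
    obtain ⟨B', hB', hRB', heB', hsub⟩ :=
      ext B hB (((↑B : Set α) ∩ Set.Iio e) ∪ {v}) hRsub e heE heB hecl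
    have hvB' : v ∈ B' := Finset.mem_coe.1 (hRB' (Or.inr rfl))
    have key : ∀ b ∈ symmDiff B' B, e ≤ b := by
      intro b hb
      rcases Finset.mem_symmDiff.1 hb with ⟨hb1, hb2⟩ | ⟨hb1, hb2⟩
      · rcases Set.mem_insert_iff.1 (hsub (Finset.mem_coe.2 hb1)) with h | h
        · exact le_of_eq h.symm
        · exact absurd (Finset.mem_coe.1 h) hb2
      · by_contra hlt
        exact hb2 (Finset.mem_coe.1 (hRB' (Or.inl ⟨Finset.mem_coe.2 hb1, lt_of_not_ge hlt⟩)))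
    rcases hBmin B' hB' hvB' with heq | ⟨a, ha, hall⟩
    · exact heB (heq ▸ heB')
    · have ha' := Finset.mem_sdiff.1 ha
      have h1 : a ≤ e := hall e (Finset.mem_symmDiff.2 (Or.inr ⟨heB', heB⟩))
      have h2 : e ≤ a := key a (Finset.mem_symmDiff.2 (Or.inr ⟨ha'.1, ha'.2⟩))
      exact heB ((le_antisymm h1 h2) ▸ ha'.1)
  -- main argument: minimal counterexample
  intro w hw
  by_contra hwB₀
  set T : Finset α := Finset.univ.filter (fun x => x ∈ B.erase v ∧ x ∉ B₀) with hT
  have hTne : T.Nonempty := ⟨w, Finset.mem_filter.2 ⟨Finset.mem_univ w, hw, hwB₀⟩⟩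
  set e : α := T.min' hTne with he
  obtain ⟨-, heBv, heB₀⟩ := Finset.mem_filter.1 (T.min'_mem hTne)
  have heB : e ∈ B := Finset.mem_of_mem_erase heBv
  have hev : e ≠ v := Finset.ne_of_mem_erase heBv
  have hminimal : ∀ x, x ∈ B.erase v → x < e → x ∈ B₀ := by
    intro x hx hxe
    by_contra hxB₀
    exact absurd (T.min'_le x (Finset.mem_filter.2 ⟨Finset.mem_univ x, hx, hxB₀⟩))
      (not_le.2 hxe)
  set Pv : Set α := ((↑B : Set α) ∩ Set.Iio e) ∪ {v} with hPv
  have hPvB : Pv ⊆ ↑B := by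
    rintro x (hx | hx)
    · exact hx.1
    · rcases hx with rfl; exact Finset.mem_coe.2 hvB
  have hPvE : Pv ⊆ M.E := hPvB.trans (by rw [hME]; exact_mod_cast hground B hB)
  have hePv : e ∉ Pv := by
    rintro (hx | hx)
    · exact absurd hx.2 (lt_irrefl e)
    · exact hev hx
  -- Q ⊆ closure Pv
  have hQcl : (↑B₀ : Set α) ∩ Set.Iio e ⊆ M.closure Pv := by
    rintro b ⟨hbB₀, hblt⟩
    by_cases hbB : b ∈ B
    · exact M.subset_closure Pv hPvE (Or.inl ⟨Finset.mem_coe.2 hbB, hblt⟩)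
    · have hbv : b ≠ v := fun h => hv (h ▸ Finset.mem_coe.1 hbB₀)
      have hbE : b ∈ E := hground B₀ hB₀ (Finset.mem_coe.1 hbB₀)
      have := lemA' b hbE hbB hbv
      refine M.closure_subset_closure ?_ this
      rintro x (hx | hx)
      · exact Or.inl ⟨hx.1, lt_trans hx.2 hblt⟩
      · exact Or.inr hx
  have hecl : (e : α) ∈ M.closure Pv := by
    have h1 := lemA e (hground B hB heB) heB₀
    exact M.closure_subset_closure_of_subset_closure hQcl h1
  -- but insert e Pv is independent
  have hPvindep : M.Indep Pv := (hBaseB hB).indep.subset hPvB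
  have hins : M.Indep (insert e Pv) := (hBaseB hB).indep.subset (by
    rintro x (hx | hx)
    · rcases hx; exact Finset.mem_coe.2 heB
    · exact hPvB hx)
  rw [hPvindep.insert_indep_iff_of_notMem hePv] at hins
  exact hins.2 hecl
end

section
/- Let Ψ = (E, Δ) be a pure ordered complex satisfying the quasi-exchange axiom. For every facet B there exists b ∈ IP(B) and a facet B' such that IP(B') = IP(B) \ {b}, provided B ≠ B₀. Consequently the internal order on the facets, graded by |IP(B)|, is graded. -/
variable {α : Type*} [LinearOrder α] [DecidableEq α] [Fintype α]

/-!
Take `b` the least internally passive element of `B` and try to realise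
`T = IP(B) \ {b}` as the set of internally passive elements of some facet. As long as the current
facet `F` has an internally passive element `g ∉ T` (necessarily below all of `T`), replace `g` by
the least `g' < g` that still gives a facet. By the quasi-exchange axiom, internally passive
elements above `g` survive this exchange, and every new internally passive element lies below `g`
(`g'` itself is not, by its minimality). The exchange decreases `F` in colex order, so the process
stops, and it stops exactly at a facet with `IP = T`. That `B ≠ B₀` has an internally passive
element follows from `IP(B₀) = ∅` by applying the quasi-exchange axiom at the largest element of
`B ∆ B₀`.
-/

open Finset Colex

variable {Δ : Finset α → Prop} {F G B₀ : Finset α} {x g : α}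

omit [Fintype α] in
lemma internallyPassive_of_forall_sdiff_lt (hQE : QE Δ) (hF : IsFacet Δ F) (hG : IsFacet Δ G)
    (hx : x ∈ F \ G) (hlt : ∀ y ∈ G \ F, y < x) : InternallyPassive Δ F x := by
  obtain ⟨y, hy, hfacet⟩ := hQE hF hG x hx hlt
  exact ⟨(mem_sdiff.1 hx).1, y, hlt y hy, (mem_sdiff.1 hy).2, hfacet⟩

omit [Fintype α] in
lemma InternallyPassive.of_forall_sdiff_lt (hQE : QE Δ) (hF : IsFacet Δ F)
    (hx : InternallyPassive Δ G x) (hxF : x ∈ F) (hlt : ∀ y ∈ G \ F, y < x) :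
    InternallyPassive Δ F x := by
  obtain ⟨-, c, hcx, -, hfacet⟩ := hx
  refine internallyPassive_of_forall_sdiff_lt hQE hF hfacet ?_ fun y hy => ?_
  · simp [hxF, hcx.ne']
  · obtain ⟨hyc | ⟨hyx, hyG⟩, hyF⟩ : (y = c ∨ y ≠ x ∧ y ∈ G) ∧ y ∉ F := by simpa using hy
    · exact hyc ▸ hcx
    · exact hlt y (mem_sdiff.2 ⟨hyG, hyF⟩)

omit [Fintype α] in
lemma IsLexMinFacet.not_internallyPassive (hB₀ : IsLexMinFacet Δ B₀) (x : α) :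
    ¬ InternallyPassive Δ B₀ x := by
  rintro ⟨hx, c, hcx, hc, hfacet⟩
  have hxC : x ∉ insert c (B₀.erase x) := by simp [hcx.ne']
  rcases hB₀.2 hfacet with heq | ⟨a, ha, hmin⟩
  · exact hxC (heq ▸ hx)
  · have hax : a = x := by
      by_contra hax
      exact (mem_sdiff.1 ha).2 (by simp [hax, (mem_sdiff.1 ha).1])
    have hcsymm : c ∈ symmDiff B₀ (insert c (B₀.erase x)) := by simp [mem_symmDiff, hc]
    exact (hmin c hcsymm).not_gt (hax ▸ hcx)

omit [Fintype α] in
lemma exists_internallyPassive_of_ne (hQE : QE Δ) (hB₀ : IsLexMinFacet Δ B₀)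
    {B : Finset α} (hB : IsFacet Δ B) (hne : B ≠ B₀) : ∃ b, InternallyPassive Δ B b := by
  have hsymm : (symmDiff B B₀).Nonempty := symmDiff_nonempty.2 hne
  set m := (symmDiff B B₀).max' hsymm
  have hlt : ∀ y ∈ symmDiff B B₀, y ≠ m → y < m :=
    fun y hy hym => lt_of_le_of_ne ((symmDiff B B₀).le_max' y hy) hym
  rcases mem_symmDiff.1 ((symmDiff B B₀).max'_mem hsymm) with hmB | hmB₀
  · refine ⟨m, internallyPassive_of_forall_sdiff_lt hQE hB hB₀.1 (mem_sdiff.2 hmB) fun y hy => ?_⟩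
    exact hlt y (mem_symmDiff.2 (.inr (mem_sdiff.1 hy))) fun h => (mem_sdiff.1 hy).2 (h ▸ hmB.1)
  · refine absurd (internallyPassive_of_forall_sdiff_lt hQE hB₀.1 hB (mem_sdiff.2 hmB₀)
      fun y hy => ?_) (hB₀.not_internallyPassive m)
    exact hlt y (mem_symmDiff.2 (.inl (mem_sdiff.1 hy))) fun h => (mem_sdiff.1 hy).2 (h ▸ hmB₀.1)

/-- Exchanging an internally passive `g` for the least admissible `g' < g`. -/
lemma exists_exchange_of_internallyPassive (hQE : QE Δ) (hF : IsFacet Δ F)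
    (hg : InternallyPassive Δ F g) :
    ∃ F', IsFacet Δ F' ∧ toColex F' < toColex F ∧
      (∀ x, g < x → InternallyPassive Δ F x → InternallyPassive Δ F' x) ∧
      (∀ x, InternallyPassive Δ F' x → x < g ∨ InternallyPassive Δ F x) := by
  obtain ⟨hgF, hexch⟩ := hg
  obtain ⟨g', ⟨hg'g, hg'F, hfacet⟩, hmin⟩ := wellFounded_lt.has_min
    {y | y < g ∧ y ∉ F ∧ IsFacet Δ (insert y (F.erase g))} hexch
  have hg'F' : g' ∉ F.erase g := fun h => hg'F (mem_of_mem_erase h)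
  refine ⟨_, hfacet, ?_, fun x hgx hx => ?_, fun x hx => ?_⟩
  · simpa [insert_erase hgF] using (insert_lt_insert hg'F' (notMem_erase g F)).2 hg'g
  · refine hx.of_forall_sdiff_lt hQE hfacet (by simp [hx.1, hgx.ne']) fun y hy => ?_
    obtain ⟨hyF, hy'⟩ := mem_sdiff.1 hy
    by_contra! hxy
    exact hy' (mem_insert_of_mem (mem_erase.2 ⟨(hgx.trans_le hxy).ne', hyF⟩))
  rcases lt_trichotomy x g' with hxg' | rfl | hg'x
  · exact Or.inl (hxg'.trans hg'g)
  · obtain ⟨-, c, hcx, hc, hcfacet⟩ := hx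
    rw [erase_insert hg'F'] at hcfacet
    have hcF : c ∉ F := fun h =>
      hc (mem_insert_of_mem (mem_erase.2 ⟨(hcx.trans hg'g).ne, h⟩))
    exact absurd hcx (hmin c ⟨hcx.trans hg'g, hcF, hcfacet⟩)
  · refine Or.inr (hx.of_forall_sdiff_lt hQE hF ?_ fun y hy => ?_)
    · exact mem_of_mem_erase ((mem_insert.1 hx.1).resolve_left hg'x.ne')
    · obtain ⟨hyF', hyF⟩ := mem_sdiff.1 hy
      obtain rfl : y = g' := (mem_insert.1 hyF').resolve_right fun h => hyF (mem_of_mem_erase h)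
      exact hg'x

lemma exists_isFacet_internallyPassive_iff (hQE : QE Δ) (T : Set α) (hF : IsFacet Δ F)
    (hT : ∀ t ∈ T, InternallyPassive Δ F t)
    (hbelow : ∀ s, InternallyPassive Δ F s → s ∉ T → ∀ t ∈ T, s < t) :
    ∃ F', IsFacet Δ F' ∧ ∀ x, InternallyPassive Δ F' x ↔ x ∈ T := by
  have : Finite (Colex (Finset α)) := Finite.of_injective ofColex ofColex.injective
  have hwf : WellFounded fun F G : Finset α => toColex F < toColex G :=
    InvImage.wf toColex wellFounded_lt
  induction F using hwf.induction with
  | _ F ih =>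
    by_cases hdone : ∀ x, InternallyPassive Δ F x ↔ x ∈ T
    · exact ⟨F, hF, hdone⟩
    obtain ⟨g, hg, hgT⟩ : ∃ g, InternallyPassive Δ F g ∧ g ∉ T := by
      push Not at hdone
      obtain ⟨x, ⟨hx, hxT⟩ | ⟨hx, hxT⟩⟩ := hdone
      exacts [⟨x, hx, hxT⟩, absurd (hT x hxT) hx]
    obtain ⟨F', hF', hlt, hkeep, hnew⟩ := exists_exchange_of_internallyPassive hQE hF hg
    refine ih F' hlt hF' (fun t ht => hkeep t (hbelow g hg hgT t ht) (hT t ht)) ?_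
    intro s hs hsT t ht
    rcases hnew s hs with hsg | hs
    · exact hsg.trans (hbelow g hg hgT t ht)
    · exact hbelow s hs hsT t ht

theorem stmt12_general (Δ : Finset α → Prop)
    (hQE : QE Δ) (B₀ : Finset α) (hB₀ : IsLexMinFacet Δ B₀)
    (B : Finset α) (hB : IsFacet Δ B) (hne : B ≠ B₀) :
    ∃ b, InternallyPassive Δ B b ∧
      ∃ B', IsFacet Δ B' ∧
        ∀ x, (InternallyPassive Δ B' x ↔ InternallyPassive Δ B x ∧ x ≠ b) := by
  obtain ⟨b, hb, hbmin⟩ := wellFounded_lt.has_min {x | InternallyPassive Δ B x}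
    (exists_internallyPassive_of_ne hQE hB₀ hB hne)
  refine ⟨b, hb, exists_isFacet_internallyPassive_iff hQE {x | InternallyPassive Δ B x ∧ x ≠ b}
    hB (fun t ht => ht.1) fun s hs hsT t ht => ?_⟩
  obtain rfl : s = b := by simpa [hs] using hsT
  exact lt_of_le_of_ne (not_lt.1 (hbmin t ht.1)) ht.2.symm

/-- in a pure complex satisfying the quasi-exchange axiom, any facet
`B ≠ B₀` admits `b ∈ IP(B)` and a facet `B'` with `IP(B') = IP(B) \ {b}`. -/
theorem stmt12 (E : Finset α) (Δ : Finset α → Prop) (hΔ : IsComplexOn E Δ)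
    (hpure : IsPure Δ) (hQE : QE Δ) (B₀ : Finset α) (hB₀ : IsLexMinFacet Δ B₀)
    (B : Finset α) (hB : IsFacet Δ B) (hne : B ≠ B₀) :
    ∃ b, InternallyPassive Δ B b ∧
      ∃ B', IsFacet Δ B' ∧
        ∀ x, (InternallyPassive Δ B' x ↔ InternallyPassive Δ B x ∧ x ≠ b) :=
  stmt12_general Δ hQE B₀ hB₀ B hB hne
end

section
/- Let Ψ = (E, Δ) be a pure ordered complex satisfying the quasi-independence axiom and let A ⊆ E be a subset such that the rank of A equals |B₀ ∩ A|, where B₀ is the lexicographically smallest facet. Then the restriction Δ|_A is pure. -/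
/-!
Apply the quasi-independence axiom with `I = ∅`, for which `B_{∅,0} = B₀`: the face `B₀ ∩ A`
lies in `B₀`, so any strictly smaller face inside `A` can be extended by an element of
`B₀ ∩ A`. Hence no facet of `Δ|_A` is smaller than `B₀ ∩ A`, while `rank A = |B₀ ∩ A|` bounds
them from above, and all facets of `Δ|_A` have cardinality `|B₀ ∩ A|`.
-/

variable {α : Type*} [LinearOrder α] [DecidableEq α] [Fintype α]

section

omit [Fintype α]

omit [LinearOrder α] in
theorem contract_empty (Δ : Finset α → Prop) : contract Δ ∅ = Δ := by
  funext J
  simp [contract]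

theorem QI.exists_insert_of_subset_lexMinFacet {Δ : Finset α → Prop} (hQI : QI Δ)
    {B₀ I₁ I₂ : Finset α} (hB₀ : IsLexMinFacet Δ B₀) (hI₁B₀ : I₁ ⊆ B₀) (hI₁ : Δ I₁)
    (hI₂ : Δ I₂) (hcard : I₂.card < I₁.card) : ∃ e ∈ I₁ \ I₂, Δ (insert e I₂) :=
  hQI.2 hI₁ hI₂ hcard
    ⟨∅, Finset.empty_subset _, B₀, by rwa [contract_empty], by simpa using hI₁B₀⟩

theorem card_eq_of_isFacet_restrict {Δ : Finset α → Prop} (hΔ : IsComplex Δ) (hQI : QI Δ)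
    {B₀ A B : Finset α} (hB₀ : IsLexMinFacet Δ B₀)
    (hrank : ∀ I, Δ I → I ⊆ A → I.card ≤ (B₀ ∩ A).card)
    (hB : IsFacet (fun s => Δ s ∧ s ⊆ A) B) : B.card = (B₀ ∩ A).card := by
  refine (hrank B hB.1.1 hB.1.2).antisymm (not_lt.mp fun hlt => ?_)
  obtain ⟨e, he, hface⟩ := hQI.exists_insert_of_subset_lexMinFacet hB₀
    Finset.inter_subset_left (hΔ hB₀.1.1 Finset.inter_subset_left) hB.1.1 hlt
  rw [Finset.mem_sdiff, Finset.mem_inter] at he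
  have hmax := hB.2 ⟨hface, Finset.insert_subset he.1.2 hB.1.2⟩ (Finset.subset_insert e B)
  exact he.2 (hmax ▸ Finset.mem_insert_self e B)
end

theorem stmt13_general (E : Finset α) (Δ : Finset α → Prop) (hΔ : IsComplexOn E Δ)
    (hQI : QI Δ) (B₀ : Finset α) (hB₀ : IsLexMinFacet Δ B₀)
    (A : Finset α)
    (hrank : ∀ I, Δ I → I ⊆ A → I.card ≤ (B₀ ∩ A).card) :
    IsPure (fun s => Δ s ∧ s ⊆ A) := fun _ _ hB hB' => by
  rw [card_eq_of_isFacet_restrict hΔ.2 hQI hB₀ hrank hB,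
    card_eq_of_isFacet_restrict hΔ.2 hQI hB₀ hrank hB']

/-- in a pure complex satisfying the quasi-independence axiom, if
`A ⊆ E` satisfies `rank(A) = |B₀ ∩ A|`, then the restriction to `A` is pure. -/
theorem stmt13 (E : Finset α) (Δ : Finset α → Prop) (hΔ : IsComplexOn E Δ)
    (hQI : QI Δ) (B₀ : Finset α) (hB₀ : IsLexMinFacet Δ B₀)
    (A : Finset α) (hA : A ⊆ E)
    (hrank : ∀ I, Δ I → I ⊆ A → I.card ≤ (B₀ ∩ A).card) :
    IsPure (fun s => Δ s ∧ s ⊆ A) :=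
  stmt13_general E Δ hΔ hQI B₀ hB₀ A hrank
end

section
/- Let Ψ and Ψ' be pure ordered complexes each satisfying the quasi-exchange axiom, on disjoint ordered ground sets E and E'. For any shuffle of E and E' (a totally ordered set containing both with their orders preserved), the join Ψ * Ψ' (faces are unions I ∪ I' with I a face of Ψ and I' a face of Ψ') also satisfies the quasi-exchange axiom. -/
variable {α : Type*} [LinearOrder α] [DecidableEq α] [Fintype α]

lemma exists_facet_superset (Δ : Finset α → Prop) {s : Finset α} (hs : Δ s) :
    ∃ B, IsFacet Δ B ∧ s ⊆ B := by
  classical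
  have hfin : {t : Finset α | Δ t ∧ s ⊆ t}.Finite := Set.toFinite _
  obtain ⟨B, hB, hmax⟩ :=
    Set.Finite.exists_maximalFor Finset.card _ hfin ⟨s, hs, subset_rfl⟩
  refine ⟨B, ⟨hB.1, fun C hC hBC => ?_⟩, hB.2⟩
  exact Finset.eq_of_subset_of_card_le hBC
    (hmax ⟨hC, hB.2.trans hBC⟩ (Finset.card_le_card hBC))

/-- the join (along any shuffle of the ground sets) of two pure
complexes satisfying the quasi-exchange axiom satisfies the quasi-exchange axiom. -/
theorem stmt14 (E E' : Finset α) (hdisj : Disjoint E E')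
    (Δ Δ' : Finset α → Prop) (hΔ : IsComplexOn E Δ) (hΔ' : IsComplexOn E' Δ')
    (hpure : IsPure Δ) (hpure' : IsPure Δ') (hQE : QE Δ) (hQE' : QE Δ') :
    IsPure (fun s => ∃ I I', Δ I ∧ Δ' I' ∧ s = I ∪ I') ∧
    QE (fun s => ∃ I I', Δ I ∧ Δ' I' ∧ s = I ∪ I') := by
  classical
  set J : Finset α → Prop := fun s => ∃ I I', Δ I ∧ Δ' I' ∧ s = I ∪ I' with hJdef
  obtain ⟨hE, hdc⟩ := hΔ
  obtain ⟨hE', hdc'⟩ := hΔ'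
  -- a face of Δ is disjoint from a face of Δ'
  have hdis : ∀ {I I' : Finset α}, Δ I → Δ' I' → Disjoint I I' := by
    intro I I' hI hI'
    exact hdisj.mono (hE hI) (hE' hI')
  -- decomposing a union
  have hdec : ∀ {I I' : Finset α}, Δ I → Δ' I' → (I ∪ I') ∩ E = I ∧ (I ∪ I') ∩ E' = I' := by
    intro I I' hI hI'
    constructor
    · ext x
      simp only [Finset.mem_inter, Finset.mem_union]
      constructor
      · rintro ⟨hx | hx, hxE⟩
        · exact hx
        · exact absurd hxE (Finset.disjoint_right.mp hdisj (hE' hI' hx))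
      · intro hx; exact ⟨Or.inl hx, hE hI hx⟩
    · ext x
      simp only [Finset.mem_inter, Finset.mem_union]
      constructor
      · rintro ⟨hx | hx, hxE⟩
        · exact absurd hxE (Finset.disjoint_left.mp hdisj (hE hI hx))
        · exact hx
      · intro hx; exact ⟨Or.inr hx, hE' hI' hx⟩
  -- facets of the join
  have hfacet : ∀ {B B' : Finset α}, IsFacet Δ B → IsFacet Δ' B' → IsFacet J (B ∪ B') := by
    intro B B' hB hB'
    refine ⟨⟨B, B', hB.1, hB'.1, rfl⟩, ?_⟩
    rintro C ⟨K, K', hK, hK', rfl⟩ hsub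
    have h1 : B ⊆ K := by
      intro x hx
      rcases Finset.mem_union.mp (hsub (Finset.mem_union_left _ hx)) with h | h
      · exact h
      · exact absurd (hE hB.1 hx) (Finset.disjoint_right.mp hdisj (hE' hK' h))
    have h2 : B' ⊆ K' := by
      intro x hx
      rcases Finset.mem_union.mp (hsub (Finset.mem_union_right _ hx)) with h | h
      · exact absurd (hE' hB'.1 hx) (Finset.disjoint_left.mp hdisj (hE hK h))
      · exact h
    rw [hB.2 hK h1, hB'.2 hK' h2]
  have hfacet' : ∀ {s : Finset α}, IsFacet J s →
      IsFacet Δ (s ∩ E) ∧ IsFacet Δ' (s ∩ E') ∧ s = (s ∩ E) ∪ (s ∩ E') := by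
    intro s hs
    obtain ⟨I, I', hI, hI', rfl⟩ := hs.1
    obtain ⟨hIE, hIE'⟩ := hdec hI hI'
    rw [hIE, hIE']
    obtain ⟨B, hB, hIB⟩ := exists_facet_superset Δ hI
    obtain ⟨B', hB', hIB'⟩ := exists_facet_superset Δ' hI'
    have hsub : I ∪ I' ⊆ B ∪ B' := Finset.union_subset_union hIB hIB'
    have heq : I ∪ I' = B ∪ B' := hs.2 ⟨B, B', hB.1, hB'.1, rfl⟩ hsub
    obtain ⟨hBE, hBE'⟩ := hdec hB.1 hB'.1
    have hI_eq : I = B := by rw [← hIE, heq, hBE]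
    have hI'_eq : I' = B' := by rw [← hIE', heq, hBE']
    subst hI_eq; subst hI'_eq
    exact ⟨hB, hB', rfl⟩
  constructor
  · -- purity
    intro s t hs ht
    obtain ⟨hs1, hs2, hs3⟩ := hfacet' hs
    obtain ⟨ht1, ht2, ht3⟩ := hfacet' ht
    rw [hs3, ht3, Finset.card_union_of_disjoint (hdis hs1.1 hs2.1),
      Finset.card_union_of_disjoint (hdis ht1.1 ht2.1),
      hpure hs1 ht1, hpure' hs2 ht2]
  · -- quasi-exchange
    intro B₁ B₂ hB₁ hB₂ b₁ hb₁ hlt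
    obtain ⟨hA₁, hA₁', hB₁eq⟩ := hfacet' hB₁
    obtain ⟨hA₂, hA₂', hB₂eq⟩ := hfacet' hB₂
    set A₁ := B₁ ∩ E with hA₁def
    set A₁' := B₁ ∩ E' with hA₁'def
    set A₂ := B₂ ∩ E with hA₂def
    set A₂' := B₂ ∩ E' with hA₂'def
    obtain ⟨hb₁B₁, hb₁B₂⟩ := Finset.mem_sdiff.mp hb₁
    have hb₁mem : b₁ ∈ A₁ ∨ b₁ ∈ A₁' := by
      have := hb₁B₁; rw [hB₁eq] at this; exact Finset.mem_union.mp this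
    rcases hb₁mem with hb₁A | hb₁A
    · -- b₁ in the E part
      have hb₁E : b₁ ∈ E := (Finset.mem_inter.mp hb₁A).2
      have hb₁A₂ : b₁ ∉ A₂ := fun h => hb₁B₂ (Finset.mem_inter.mp h).1
      have hsub : A₂ \ A₁ ⊆ B₂ \ B₁ := by
        intro x hx
        obtain ⟨hx2, hx1⟩ := Finset.mem_sdiff.mp hx
        refine Finset.mem_sdiff.mpr ⟨(Finset.mem_inter.mp hx2).1, fun h => ?_⟩
        exact hx1 (Finset.mem_inter.mpr ⟨h, (Finset.mem_inter.mp hx2).2⟩)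
      obtain ⟨b₂, hb₂, hfac⟩ := hQE hA₁ hA₂ b₁ (Finset.mem_sdiff.mpr ⟨hb₁A, hb₁A₂⟩)
        (fun b hb => hlt b (hsub hb))
      refine ⟨b₂, hsub hb₂, ?_⟩
      have hb₂E : b₂ ∈ E := (Finset.mem_inter.mp (Finset.mem_sdiff.mp hb₂).1).2
      have hb₁notA₁' : b₁ ∉ A₁' := fun h =>
        Finset.disjoint_left.mp hdisj hb₁E (Finset.mem_inter.mp h).2
      have hb₂notA₁' : b₂ ∉ A₁' := fun h =>
        Finset.disjoint_left.mp hdisj hb₂E (Finset.mem_inter.mp h).2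
      have heq : insert b₂ (B₁.erase b₁) = (insert b₂ (A₁.erase b₁)) ∪ A₁' := by
        ext x
        simp only [Finset.mem_insert, Finset.mem_erase, Finset.mem_union]
        constructor
        · rintro (rfl | ⟨hne, hx⟩)
          · exact Or.inl (Or.inl rfl)
          · rw [hB₁eq] at hx
            rcases Finset.mem_union.mp hx with h | h
            · exact Or.inl (Or.inr ⟨hne, h⟩)
            · exact Or.inr h
        · rintro ((rfl | ⟨hne, hx⟩) | hx)
          · exact Or.inl rfl
          · exact Or.inr ⟨hne, by rw [hB₁eq]; exact Finset.mem_union_left _ hx⟩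
          · refine Or.inr ⟨fun h => hb₁notA₁' (h ▸ hx), ?_⟩
            rw [hB₁eq]; exact Finset.mem_union_right _ hx
      rw [heq]
      exact hfacet hfac hA₁'
    · -- b₁ in the E' part
      have hb₁E : b₁ ∈ E' := (Finset.mem_inter.mp hb₁A).2
      have hb₁A₂ : b₁ ∉ A₂' := fun h => hb₁B₂ (Finset.mem_inter.mp h).1
      have hsub : A₂' \ A₁' ⊆ B₂ \ B₁ := by
        intro x hx
        obtain ⟨hx2, hx1⟩ := Finset.mem_sdiff.mp hx
        refine Finset.mem_sdiff.mpr ⟨(Finset.mem_inter.mp hx2).1, fun h => ?_⟩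
        exact hx1 (Finset.mem_inter.mpr ⟨h, (Finset.mem_inter.mp hx2).2⟩)
      obtain ⟨b₂, hb₂, hfac⟩ := hQE' hA₁' hA₂' b₁ (Finset.mem_sdiff.mpr ⟨hb₁A, hb₁A₂⟩)
        (fun b hb => hlt b (hsub hb))
      refine ⟨b₂, hsub hb₂, ?_⟩
      have hb₂E : b₂ ∈ E' := (Finset.mem_inter.mp (Finset.mem_sdiff.mp hb₂).1).2
      have hb₁notA₁ : b₁ ∉ A₁ := fun h =>
        Finset.disjoint_right.mp hdisj hb₁E (Finset.mem_inter.mp h).2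
      have hb₂notA₁ : b₂ ∉ A₁ := fun h =>
        Finset.disjoint_right.mp hdisj hb₂E (Finset.mem_inter.mp h).2
      have heq : insert b₂ (B₁.erase b₁) = A₁ ∪ (insert b₂ (A₁'.erase b₁)) := by
        ext x
        simp only [Finset.mem_insert, Finset.mem_erase, Finset.mem_union]
        constructor
        · rintro (rfl | ⟨hne, hx⟩)
          · exact Or.inr (Or.inl rfl)
          · rw [hB₁eq] at hx
            rcases Finset.mem_union.mp hx with h | h
            · exact Or.inl h
            · exact Or.inr (Or.inr ⟨hne, h⟩)
        · rintro (hx | (rfl | ⟨hne, hx⟩))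
          · refine Or.inr ⟨fun h => hb₁notA₁ (h ▸ hx), ?_⟩
            rw [hB₁eq]; exact Finset.mem_union_left _ hx
          · exact Or.inl rfl
          · exact Or.inr ⟨hne, by rw [hB₁eq]; exact Finset.mem_union_right _ hx⟩
      rw [heq]
      exact hfacet hA₁ hfac
end

section
/- Let Ψ = (E, Δ) be a pure ordered complex satisfying both the quasi-exchange axiom and the First Basis Property. Then for every facet B, every element of B \ B₀ is internally passive in B, where B₀ is the lexicographically smallest facet. -/
variable {α : Type*} [LinearOrder α] [DecidableEq α] [Fintype α]

/-!
By induction on the First Basis Property. If `B \ B₀ = {b}` (or the rank is one), then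
`B₀ \ B` is a single element `x`, and since `B₀` is lexicographically smaller than `B`
we get `x < b`, so quasi-exchange of `b` against `B₀` yields a smaller replacement for `b`.
Otherwise choose another `v ∈ B \ B₀` and contract it: `Δ / v` is again pure with the
quasi-exchange property, its lexicographically smallest facet lies inside `B₀`, so `b` is
internally passive in `B \ {v}` there by induction, and this lifts back to `Δ`.
-/

section

omit [Fintype α]

open Finset

variable {Δ : Finset α → Prop}

theorem lexLt_asymm {B B' : Finset α} (h : lexLt B B') : ¬ lexLt B' B := by
  rintro ⟨a', ha', ha'_le⟩
  obtain ⟨a, ha, ha_le⟩ := h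
  have haa' : a = a' :=
    le_antisymm (ha_le a' (mem_union_right _ ha')) (ha'_le a (mem_union_right _ ha))
  exact (mem_sdiff.1 ha').2 (haa' ▸ (mem_sdiff.1 ha).1)

theorem IsLexMinFacet.unique {B₀ B₀' : Finset α} (h : IsLexMinFacet Δ B₀)
    (h' : IsLexMinFacet Δ B₀') : B₀ = B₀' := by
  rcases h.2 h'.1 with heq | hlt
  · exact heq
  rcases h'.2 h.1 with heq | hlt'
  · exact heq.symm
  exact absurd hlt' (lexLt_asymm hlt)

theorem lt_of_lexLt_of_card_sdiff_le_one {B₀ B : Finset α} (h : lexLt B₀ B)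
    (hcard : #(B₀ \ B) ≤ 1) {x b : α} (hx : x ∈ B₀ \ B) (hb : b ∈ B \ B₀) : x < b := by
  obtain ⟨a, ha, ha_le⟩ := h
  rw [card_le_one.1 hcard x hx a ha]
  refine lt_of_le_of_ne (ha_le b (mem_union_right _ hb)) ?_
  rintro rfl
  exact (mem_sdiff.1 ha).2 (mem_sdiff.1 hb).1

theorem internallyPassive_of_forall_sdiff_lt_s17 (hQE : QE Δ) {B₀ B : Finset α} {b : α}
    (hB₀ : IsFacet Δ B₀) (hB : IsFacet Δ B) (hb : b ∈ B \ B₀) (hlt : ∀ x ∈ B₀ \ B, x < b) :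
    InternallyPassive Δ B b := by
  obtain ⟨b', hb', hfacet⟩ := hQE hB hB₀ b hb hlt
  exact ⟨(mem_sdiff.1 hb).1, b', hlt b' hb', (mem_sdiff.1 hb').2, hfacet⟩

theorem internallyPassive_of_card_sdiff_le_one (hQE : QE Δ) {B₀ B : Finset α} {b : α}
    (hB₀ : IsLexMinFacet Δ B₀) (hB : IsFacet Δ B) (hb : b ∈ B \ B₀) (hcard : #(B₀ \ B) ≤ 1) :
    InternallyPassive Δ B b := by
  have hlex : lexLt B₀ B := by
    rcases hB₀.2 hB with rfl | hlt
    · exact absurd (mem_sdiff.1 hb).1 (mem_sdiff.1 hb).2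
    · exact hlt
  exact internallyPassive_of_forall_sdiff_lt_s17 hQE hB₀.1 hB hb
    fun x hx => lt_of_lexLt_of_card_sdiff_le_one hlex hcard hx hb

section

omit [LinearOrder α]

theorem isComplex_contract (hc : IsComplex Δ) (I : Finset α) : IsComplex (contract Δ I) :=
  fun _ _ ⟨hdisj, hface⟩ hst =>
    ⟨disjoint_of_subset_left hst hdisj, hc hface (union_subset_union_left hst)⟩

theorem isFacet_contract_singleton_iff {v : α} {J : Finset α} :
    IsFacet (contract Δ {v}) J ↔ v ∉ J ∧ IsFacet Δ (insert v J) := by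
  simp only [IsFacet, contract, disjoint_singleton_right, union_singleton]
  constructor
  · rintro ⟨⟨hvJ, hJ⟩, hmax⟩
    refine ⟨hvJ, hJ, fun C hC hJC => ?_⟩
    have hvC : v ∈ C := hJC (mem_insert_self v J)
    have hJ_sub : J ⊆ C.erase v := fun x hx =>
      mem_erase.2 ⟨fun h => hvJ (h ▸ hx), hJC (mem_insert_of_mem hx)⟩
    rw [hmax ⟨notMem_erase v C, by rwa [insert_erase hvC]⟩ hJ_sub, insert_erase hvC]
  · rintro ⟨hvJ, hJ, hmax⟩
    refine ⟨⟨hvJ, hJ⟩, fun C ⟨hvC, hC⟩ hJC => hJC.antisymm fun x hx => ?_⟩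
    rcases mem_insert.1 (hmax hC (insert_subset_insert v hJC) ▸ mem_insert_of_mem hx)
      with rfl | hxJ
    · exact absurd hx hvC
    · exact hxJ

theorem isPure_contract_singleton (hpure : IsPure Δ) (v : α) : IsPure (contract Δ {v}) := by
  intro J J' hJ hJ'
  obtain ⟨hvJ, hJ⟩ := isFacet_contract_singleton_iff.1 hJ
  obtain ⟨hvJ', hJ'⟩ := isFacet_contract_singleton_iff.1 hJ'
  have := hpure hJ hJ'
  rwa [card_insert_of_notMem hvJ, card_insert_of_notMem hvJ', Nat.add_right_cancel_iff] at this

end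

theorem qe_contract_singleton (hQE : QE Δ) (v : α) : QE (contract Δ {v}) := by
  intro B₁ B₂ hB₁ hB₂ b₁ hb₁ hlt
  obtain ⟨hvB₁, hB₁⟩ := isFacet_contract_singleton_iff.1 hB₁
  obtain ⟨hvB₂, hB₂⟩ := isFacet_contract_singleton_iff.1 hB₂
  have hb₁v : b₁ ≠ v := fun h => hvB₁ (h ▸ (mem_sdiff.1 hb₁).1)
  have hsdiff : ∀ {s t : Finset α}, v ∉ s → insert v s \ insert v t = s \ t := fun hvs => by
    rw [insert_sdiff_insert, sdiff_insert_of_notMem hvs]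
  obtain ⟨b₂, hb₂, hfacet⟩ := hQE hB₁ hB₂ b₁ (by rwa [hsdiff hvB₁]) (by rwa [hsdiff hvB₂])
  rw [hsdiff hvB₂] at hb₂
  refine ⟨b₂, hb₂, isFacet_contract_singleton_iff.2 ⟨?_, ?_⟩⟩
  · have hb₂v : v ≠ b₂ := fun h => hvB₂ (h ▸ (mem_sdiff.1 hb₂).1)
    simp [hb₂v, hvB₁]
  · rwa [erase_insert_of_ne hb₁v.symm, insert_comm] at hfacet

theorem internallyPassive_of_contract_singleton {B : Finset α} {v b : α} (hvB : v ∈ B)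
    (hvb : v ≠ b) (h : InternallyPassive (contract Δ {v}) (B.erase v) b) :
    InternallyPassive Δ B b := by
  obtain ⟨hb, b', hb'b, hb'B, hfacet⟩ := h
  obtain ⟨hv_notMem, hfacet⟩ := isFacet_contract_singleton_iff.1 hfacet
  have hb'v : b' ≠ v := fun h => hv_notMem (h ▸ mem_insert_self b' _)
  refine ⟨mem_of_mem_erase hb, b', hb'b, fun h => hb'B (mem_erase.2 ⟨hb'v, h⟩), ?_⟩
  rwa [erase_right_comm, insert_comm, insert_erase (mem_erase.2 ⟨hvb, hvB⟩)] at hfacet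

theorem FBP.internallyPassive (hFBP : FBP Δ) (hc : IsComplex Δ) (hpure : IsPure Δ)
    (hQE : QE Δ) {B₀ B : Finset α} (hB₀ : IsLexMinFacet Δ B₀) (hB : IsFacet Δ B) {b : α}
    (hb : b ∈ B \ B₀) : InternallyPassive Δ B b := by
  induction hFBP generalizing B₀ B b with
  | rank1 Δ hrank =>
    refine internallyPassive_of_card_sdiff_le_one hQE hB₀ hB hb ?_
    exact (card_le_card sdiff_subset).trans (hrank B₀ hB₀.1.1)
  | unique Δ B' _ hu =>
    rw [hu B hB, ← hu B₀ hB₀.1, sdiff_self] at hb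
    exact absurd hb (notMem_empty b)
  | step Δ B₀' h₀ _ hcontract ih =>
    obtain rfl := IsLexMinFacet.unique hB₀ h₀
    by_cases hv : ∃ v ∈ B \ B₀, v ≠ b
    · obtain ⟨v, hv, hvb⟩ := hv
      obtain ⟨hvB, hvB₀⟩ := mem_sdiff.1 hv
      have hΔv : Δ {v} := hc hB.1 (singleton_subset_iff.2 hvB)
      obtain ⟨Bv, hBv, hBv_sub⟩ := hcontract v hΔv hvB₀
      have hBv_facet : IsFacet (contract Δ {v}) (B.erase v) :=
        isFacet_contract_singleton_iff.2 ⟨notMem_erase v B, by rwa [insert_erase hvB]⟩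
      have hb_mem : b ∈ B.erase v \ Bv :=
        mem_sdiff.2 ⟨mem_erase.2 ⟨hvb.symm, (mem_sdiff.1 hb).1⟩,
          fun h => (mem_sdiff.1 hb).2 (hBv_sub h)⟩
      exact internallyPassive_of_contract_singleton hvB hvb <|
        ih v hΔv hvB₀ (isComplex_contract hc _) (isPure_contract_singleton hpure v)
          (qe_contract_singleton hQE v) hBv hBv_facet hb_mem
    · push Not at hv
      refine internallyPassive_of_card_sdiff_le_one hQE hB₀ hB hb ?_
      rw [card_sdiff_comm (hpure hB₀.1 hB)]
      exact card_le_one.2 fun x hx y hy => (hv x hx).trans (hv y hy).symm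

end

/-- in a pure complex satisfying the quasi-exchange axiom and the
First Basis Property, every element of `B \ B₀` is internally passive in `B`. -/
theorem stmt17 (E : Finset α) (Δ : Finset α → Prop) (hΔ : IsComplexOn E Δ)
    (hpure : IsPure Δ) (hQE : QE Δ) (hFBP : FBP Δ)
    (B₀ : Finset α) (hB₀ : IsLexMinFacet Δ B₀) (B : Finset α) (hB : IsFacet Δ B) :
    ∀ b ∈ B, b ∉ B₀ → InternallyPassive Δ B b :=
  fun _ hb hb₀ =>
    hFBP.internallyPassive hΔ.2 hpure hQE hB₀ hB (Finset.mem_sdiff.2 ⟨hb, hb₀⟩)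
end
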